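/- arXiv:1710.00298 — 2 statements merged into one kernel-verified Lean document; each statement's English description precedes it below -/
import Mathlib

section
/- For every k ≥ 2, the k-uniform hypergraph H_{k,1} with vertex set {(i,j) : 1 ≤ i,j ≤ k} and edge set consisting of the k columns {(i,j) : 1 ≤ i ≤ k} for each fixed j ∈ {1,…,k} together with the k−1 rows {(i,j) : 1 ≤ j ≤ k} for each fixed i ∈ {1,…,k−1} satisfies γ_g(H_{k,1}) = γ_g'(H_{k,1}) = k + ⌊(k−1)/2⌋. -/
attribute [local instance 10] Classical.propDecidable

variable {V : Type}

/-- The closed neighborhood of a vertex in a hypergraph given by its edge set. -/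
noncomputable def closedNbhd [Fintype V] (H : Finset (Finset V)) (v : V) : Finset V :=
  Finset.univ.filter (fun u => u = v ∨ ∃ e ∈ H, u ∈ e ∧ v ∈ e)

private lemma card_sdiff_union_lt [Fintype V] {S T : Finset V} (h : ¬ T ⊆ S) :
    (Finset.univ \ (S ∪ T)).card < (Finset.univ \ S).card := by
  classical
  obtain ⟨u, huT, huS⟩ := Finset.not_subset.mp h
  apply Finset.card_lt_card
  rw [Finset.ssubset_def]
  constructor
  · exact Finset.sdiff_subset_sdiff (Finset.Subset.refl _) Finset.subset_union_left
  · intro hc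
    have hu : u ∈ Finset.univ \ S := by simp [huS]
    have := hc hu
    simp [huT] at this

/-- Value of the domination game on a hypergraph: `S` is the set of vertices already
dominated, `dom = true` iff Dominator is the next player to move.  A legal move is a vertex
dominating at least one new vertex; Dominator minimizes, Staller maximizes the total
number of moves, and both play optimally. -/
noncomputable def domGameVal [Fintype V] (H : Finset (Finset V)) (dom : Bool) (S : Finset V) :
    ℕ :=
  if h : (Finset.univ.filter fun v => ¬ closedNbhd H v ⊆ S).Nonempty then
    1 + (if dom then
        (Finset.univ.filter fun v => ¬ closedNbhd H v ⊆ S).attach.inf'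
          (Finset.attach_nonempty_iff.mpr h)
          (fun v => domGameVal H false (S ∪ closedNbhd H v.1))
      else
        (Finset.univ.filter fun v => ¬ closedNbhd H v ⊆ S).attach.sup'
          (Finset.attach_nonempty_iff.mpr h)
          (fun v => domGameVal H true (S ∪ closedNbhd H v.1)))
  else 0
termination_by (Finset.univ \ S).card
decreasing_by
  · exact card_sdiff_union_lt (Finset.mem_filter.mp v.2).2
  · exact card_sdiff_union_lt (Finset.mem_filter.mp v.2).2

/-- The game domination number (Dominator starts). -/
noncomputable def gammaGame [Fintype V] (H : Finset (Finset V)) : ℕ :=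
  domGameVal H true ∅

/-- The Staller-start game domination number. -/
noncomputable def gammaGame' [Fintype V] (H : Finset (Finset V)) : ℕ :=
  domGameVal H false ∅

/-- The hypergraph `H_{k,1}`: its vertices are the cells of the `k × k` grid, its edges
are all `k` columns (second coordinate fixed) together with the first `k - 1` rows
(first coordinate fixed). -/
noncomputable def Hk1 (k : ℕ) : Finset (Finset (Fin k × Fin k)) :=
  (Finset.univ : Finset (Fin k)).image
      (fun j => Finset.univ.filter (fun p : Fin k × Fin k => p.2 = j)) ∪
    ((Finset.univ : Finset (Fin k)).filter (fun i : Fin k => (i : ℕ) < k - 1)).image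
      (fun i => Finset.univ.filter (fun p : Fin k × Fin k => p.1 = i))

/-!
After any sequence of moves the undominated vertices of `H_{k,1}` form a product
`U × (W ∪ {last row})`, where `U` is the set of undominated columns and `W` the set of short rows
not yet played; a move `(i, j)` deletes `j` from `U` and `i` from `W`. The game value therefore
depends only on `c = |U|` and `r = |W|`. Dominator always takes a new column, together with a new
row while one is left, giving `c + min ⌊r/2⌋ (c-1)`; Staller stalls by playing a fresh short row on a
dominated column, giving `c + min ⌈r/2⌉ c`, except at the start, when no column is dominated
yet. Checking these closed forms against one move is arithmetic.
-/

open Finset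

section GameValue

variable [Fintype V] {H : Finset (Finset V)} {S : Finset V}

lemma domGameVal_eq_zero (h : ∀ v, closedNbhd H v ⊆ S) (b : Bool) : domGameVal H b S = 0 := by
  rw [domGameVal, dif_neg]
  simp [h]

lemma domGameVal_true_eq_of_isLeast [DecidableEq V] {n : ℕ}
    (h : IsLeast ((fun v => domGameVal H false (S ∪ closedNbhd H v) + 1) ''
      {v | ¬ closedNbhd H v ⊆ S}) n) :
    domGameVal H true S = n := by
  -- `domGameVal` is built with the classical `DecidableEq` instance
  obtain rfl : ‹DecidableEq V› = fun a b => Classical.propDecidable (a = b) := Subsingleton.elim _ _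
  obtain ⟨⟨v, hv, rfl⟩, hle⟩ := h
  have hv : v ∈ univ.filter fun v => ¬ closedNbhd H v ⊆ S := mem_filter.mpr ⟨mem_univ v, hv⟩
  rw [domGameVal, dif_pos ⟨v, hv⟩, if_pos rfl, add_comm]
  congr 1
  apply le_antisymm
  · exact Finset.inf'_le (fun w : {x // x ∈ univ.filter fun v => ¬ closedNbhd H v ⊆ S} =>
      domGameVal H false (S ∪ closedNbhd H w.1)) (mem_attach _ ⟨v, hv⟩)
  · exact Finset.le_inf' _ _ fun w _ =>
      Nat.le_of_add_le_add_right (hle ⟨w.1, (mem_filter.mp w.2).2, rfl⟩)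

lemma domGameVal_false_eq_of_isGreatest [DecidableEq V] {n : ℕ}
    (h : IsGreatest ((fun v => domGameVal H true (S ∪ closedNbhd H v) + 1) ''
      {v | ¬ closedNbhd H v ⊆ S}) n) :
    domGameVal H false S = n := by
  obtain rfl : ‹DecidableEq V› = fun a b => Classical.propDecidable (a = b) := Subsingleton.elim _ _
  obtain ⟨⟨v, hv, rfl⟩, hle⟩ := h
  have hv : v ∈ univ.filter fun v => ¬ closedNbhd H v ⊆ S := mem_filter.mpr ⟨mem_univ v, hv⟩
  rw [domGameVal, dif_pos ⟨v, hv⟩, if_neg Bool.false_ne_true, add_comm]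
  congr 1
  apply le_antisymm
  · exact Finset.sup'_le _ _ fun w _ =>
      Nat.le_of_add_le_add_right (hle ⟨w.1, (mem_filter.mp w.2).2, rfl⟩)
  · exact Finset.le_sup' (fun w : {x // x ∈ univ.filter fun v => ¬ closedNbhd H v ⊆ S} =>
      domGameVal H true (S ∪ closedNbhd H w.1)) (mem_attach _ ⟨v, hv⟩)

end GameValue

section Grid

variable {k : ℕ} {U W : Finset (Fin k)}

def shortRows (k : ℕ) : Finset (Fin k) := univ.filter fun i => (i : ℕ) < k - 1

lemma card_shortRows : #(shortRows k) = k - 1 := by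
  simp [shortRows, Fin.card_filter_val_lt]

lemma exists_notMem_shortRows (j : Fin k) : ∃ i : Fin k, i ∉ shortRows k :=
  ⟨⟨k - 1, by have := j.isLt; omega⟩, by simp [shortRows]⟩

lemma closedNbhd_Hk1 (i j : Fin k) :
    closedNbhd (Hk1 k) (i, j) = univ.filter fun p => p.2 = j ∨ (i ∈ shortRows k ∧ p.1 = i) := by
  ext ⟨a, b⟩
  simp only [closedNbhd, Hk1, shortRows, mem_filter, mem_univ, true_and, mem_union, mem_image]
  constructor
  · rintro (h | ⟨e, ⟨j', -, rfl⟩ | ⟨i', hi', rfl⟩, hp, hv⟩) <;> simp_all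
  · rintro (rfl | ⟨hi, rfl⟩)
    · exact Or.inr ⟨_, Or.inl ⟨b, rfl⟩, by simp, by simp⟩
    · exact Or.inr ⟨_, Or.inr ⟨a, hi, rfl⟩, by simp, by simp⟩

def gridDominated (U W : Finset (Fin k)) : Finset (Fin k × Fin k) :=
  univ.filter fun p => p.2 ∉ U ∨ (p.1 ∉ W ∧ p.1 ∈ shortRows k)

lemma gridDominated_union_closedNbhd (i j : Fin k) :
    gridDominated U W ∪ closedNbhd (Hk1 k) (i, j) = gridDominated (U.erase j) (W.erase i) := by
  ext p
  simp only [gridDominated, closedNbhd_Hk1, mem_union, mem_filter, mem_univ, true_and,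
    mem_erase]
  grind

lemma not_closedNbhd_subset_gridDominated_iff (hW : W ⊆ shortRows k) (i j : Fin k) :
    ¬ closedNbhd (Hk1 k) (i, j) ⊆ gridDominated U W ↔ j ∈ U ∨ (i ∈ W ∧ U.Nonempty) := by
  simp only [closedNbhd_Hk1, gridDominated, subset_iff, mem_filter, mem_univ, true_and,
    not_forall, not_or, not_and, not_not, exists_prop, Prod.exists]
  constructor
  · rintro ⟨a, b, hab, hbU, ha⟩
    rcases hab with rfl | ⟨hi, rfl⟩
    · exact Or.inl hbU
    · exact Or.inr ⟨by_contra fun h => ha h hi, b, hbU⟩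
  · rintro (hj | ⟨hi, b, hb⟩)
    · obtain ⟨a, ha⟩ := exists_notMem_shortRows j
      exact ⟨a, j, Or.inl rfl, hj, fun _ h => (ha h).elim⟩
    · exact ⟨i, b, Or.inr ⟨hW hi, rfl⟩, hb, fun h => (h hi).elim⟩

/-- The effect of a legal move on `(#U, #W)`. A `newRow` move plays a fresh short row on an already
dominated column, so it needs `c < k`. -/
inductive GridStep (k : ℕ) : ℕ × ℕ → ℕ × ℕ → Prop
  | newColumnNewRow {c r : ℕ} : c ≠ 0 → r ≠ 0 → GridStep k (c, r) (c - 1, r - 1)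
  | newColumn {c r : ℕ} : c ≠ 0 → GridStep k (c, r) (c - 1, r)
  | newRow {c r : ℕ} : c ≠ 0 → c < k → r ≠ 0 → GridStep k (c, r) (c, r - 1)

lemma GridStep.add_lt {s t : ℕ × ℕ} (h : GridStep k s t) : t.1 + t.2 < s.1 + s.2 := by
  cases h <;> simp only <;> omega

lemma gridStep_of_legal (hW : W ⊆ shortRows k) {i j : Fin k}
    (h : ¬ closedNbhd (Hk1 k) (i, j) ⊆ gridDominated U W) :
    GridStep k (#U, #W) (#(U.erase j), #(W.erase i)) := by
  rw [not_closedNbhd_subset_gridDominated_iff hW] at h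
  by_cases hj : j ∈ U
  · have hU : #U ≠ 0 := card_ne_zero_of_mem hj
    rw [card_erase_of_mem hj]
    by_cases hi : i ∈ W
    · rw [card_erase_of_mem hi]
      exact .newColumnNewRow hU (card_ne_zero_of_mem hi)
    · rw [erase_eq_of_notMem hi]
      exact .newColumn hU
  · obtain ⟨hi, hU⟩ := h.resolve_left hj
    rw [erase_eq_of_notMem hj, card_erase_of_mem hi]
    exact .newRow hU.card_ne_zero (by simpa using card_lt_univ_of_notMem hj)
      (card_ne_zero_of_mem hi)

lemma exists_legal_of_gridStep (hW : W ⊆ shortRows k) {s : ℕ × ℕ}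
    (h : GridStep k (#U, #W) s) :
    ∃ i j, ¬ closedNbhd (Hk1 k) (i, j) ⊆ gridDominated U W ∧
      (#(U.erase j), #(W.erase i)) = s := by
  simp_rw [not_closedNbhd_subset_gridDominated_iff hW]
  cases h with
  | newColumnNewRow hc hr =>
    obtain ⟨j, hj⟩ := card_ne_zero.mp hc
    obtain ⟨i, hi⟩ := card_ne_zero.mp hr
    exact ⟨i, j, Or.inl hj, by rw [card_erase_of_mem hj, card_erase_of_mem hi]⟩
  | newColumn hc =>
    obtain ⟨j, hj⟩ := card_ne_zero.mp hc
    obtain ⟨i, hi⟩ := exists_notMem_shortRows j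
    exact ⟨i, j, Or.inl hj, by rw [card_erase_of_mem hj, erase_eq_of_notMem fun h => hi (hW h)]⟩
  | newRow hc hck hr =>
    obtain ⟨j, hj⟩ : ∃ j, j ∉ U := by
      by_contra! h
      simp [eq_univ_of_forall h] at hck
    obtain ⟨i, hi⟩ := card_ne_zero.mp hr
    exact ⟨i, j, Or.inr ⟨hi, card_ne_zero.mp hc⟩,
      by rw [erase_eq_of_notMem hj, card_erase_of_mem hi]⟩

def gridValue (k : ℕ) : Bool → ℕ × ℕ → ℕ
  | true, (c, r) => if c = 0 then 0 else c + min (r / 2) (c - 1)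
  | false, (c, r) =>
    if c = 0 then 0 else if c = k then c + min (r / 2) (c - 1) else c + min ((r + 1) / 2) c

lemma isLeast_gridValue {c r : ℕ} (hc : c ≠ 0) (hck : c ≤ k) :
    IsLeast ((fun s => gridValue k false s + 1) '' {s | GridStep k (c, r) s})
      (gridValue k true (c, r)) := by
  refine ⟨?_, ?_⟩
  · rcases eq_or_ne r 0 with rfl | hr
    · exact ⟨_, .newColumn hc, by simp only [gridValue]; split_ifs <;> omega⟩
    · exact ⟨_, .newColumnNewRow hc hr, by simp only [gridValue]; split_ifs <;> omega⟩
  · rintro _ ⟨s, hs, rfl⟩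
    cases hs <;> simp only [gridValue] <;> split_ifs <;> omega

lemma isGreatest_gridValue {c r : ℕ} (hc : c ≠ 0) (hck : c ≤ k) (hr : r ≤ k - 1) :
    IsGreatest ((fun s => gridValue k true s + 1) '' {s | GridStep k (c, r) s})
      (gridValue k false (c, r)) := by
  refine ⟨?_, ?_⟩
  · rcases eq_or_ne r 0 with rfl | hr0
    · exact ⟨_, .newColumn hc, by simp only [gridValue]; split_ifs <;> omega⟩
    rcases eq_or_lt_of_le hck with rfl | hck
    · exact ⟨_, .newColumn hc, by simp only [gridValue]; split_ifs <;> omega⟩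
    · exact ⟨_, .newRow hc hck hr0, by simp only [gridValue]; split_ifs <;> omega⟩
  · rintro _ ⟨s, hs, rfl⟩
    cases hs <;> simp only [gridValue] <;> split_ifs <;> omega

lemma image_counts_legal (hW : W ⊆ shortRows k) :
    (fun p : Fin k × Fin k => (#(U.erase p.2), #(W.erase p.1))) ''
      {p | ¬ closedNbhd (Hk1 k) p ⊆ gridDominated U W} = {s | GridStep k (#U, #W) s} := by
  ext s
  constructor
  · rintro ⟨⟨i, j⟩, h, rfl⟩
    exact gridStep_of_legal hW h
  · intro h
    obtain ⟨i, j, hij, rfl⟩ := exists_legal_of_gridStep hW h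
    exact ⟨(i, j), hij, rfl⟩

theorem domGameVal_Hk1_gridDominated (b : Bool) (hW : W ⊆ shortRows k) :
    domGameVal (Hk1 k) b (gridDominated U W) = gridValue k b (#U, #W) := by
  obtain ⟨n, hn⟩ : ∃ n, #U + #W = n := ⟨_, rfl⟩
  induction n using Nat.strong_induction_on generalizing b U W with
  | _ n ih =>
    have hmoves (b' : Bool) :
        (fun p => domGameVal (Hk1 k) b' (gridDominated U W ∪ closedNbhd (Hk1 k) p) + 1) ''
          {p | ¬ closedNbhd (Hk1 k) p ⊆ gridDominated U W} =
        (fun s => gridValue k b' s + 1) '' {s | GridStep k (#U, #W) s} := by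
      rw [← image_counts_legal hW, Set.image_image]
      refine Set.image_congr fun ⟨i, j⟩ hij => ?_
      have hlt := (gridStep_of_legal hW hij).add_lt
      rw [gridDominated_union_closedNbhd,
        ih _ (hn ▸ hlt) b' ((erase_subset i W).trans hW) rfl]
    rcases eq_or_ne #U 0 with hU | hU
    · rw [card_eq_zero.mp hU]
      refine (domGameVal_eq_zero (fun ⟨i, j⟩ => ?_) b).trans (by cases b <;> simp [gridValue])
      by_contra h
      simp [not_closedNbhd_subset_gridDominated_iff hW] at h
    have hUk : #U ≤ k := by simpa using card_le_univ U
    have hWk : #W ≤ k - 1 := card_shortRows (k := k) ▸ card_le_card hW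
    cases b
    · exact domGameVal_false_eq_of_isGreatest
        (by rw [hmoves]; exact isGreatest_gridValue hU hUk hWk)
    · exact domGameVal_true_eq_of_isLeast (by rw [hmoves]; exact isLeast_gridValue hU hUk)

end Grid

theorem stmt_17_general (k : ℕ) :
    gammaGame (Hk1 k) = k + (k - 1) / 2 ∧ gammaGame' (Hk1 k) = k + (k - 1) / 2 := by
  have hstart : (∅ : Finset (Fin k × Fin k)) = gridDominated univ (shortRows k) := by
    ext p
    simp [gridDominated]
  simp only [gammaGame, gammaGame', hstart,
    domGameVal_Hk1_gridDominated _ subset_rfl, card_univ, Fintype.card_fin, card_shortRows,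
    gridValue]
  constructor <;> split_ifs <;> omega

/-- for every `k ≥ 2`,
`γ_g(H_{k,1}) = γ_g'(H_{k,1}) = k + ⌊(k-1)/2⌋`. -/
theorem stmt_17 (k : ℕ) (hk : 2 ≤ k) :
    gammaGame (Hk1 k) = k + (k - 1) / 2 ∧ gammaGame' (Hk1 k) = k + (k - 1) / 2 :=
  stmt_17_general k
end

section
/- Let k ≥ 2 and let F be a k-uniform hypergraph with vertex set {x_1,…,x_t}. Form the k-uniform hypergraph F(H_{k,2}) by taking t pairwise disjoint copies H_{k,2}^1, …, H_{k,2}^t of the hypergraph H_{k,2} (which has vertices a, b, c, u_1, …, u_{k−1}, v_1, …, v_{k−1} and edges {a,u_1,…,u_{k−1}}, {b,u_1,…,u_{k−1}}, {b,v_1,…,v_{k−1}}, {c,v_1,…,v_{k−1}}), identifying x_i with the vertex b of the i-th copy for each 1 ≤ i ≤ t, and keeping all edges of F and of all copies. Then γ_g(F(H_{k,2})) = γ_g'(F(H_{k,2})) = 3t. -/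
attribute [local instance 10] Classical.propDecidable

variable {V : Type}

/-- The hypergraph `H_{k,2}` on `2k+1` vertices encoded as `Fin (2k+1)`:
`a = 0`, `b = 1`, `c = 2`, `u_1, …, u_{k-1}` are `3, …, k+1` and `v_1, …, v_{k-1}` are
`k+2, …, 2k`.  Its edges are `{a} ∪ U`, `{b} ∪ U`, `{b} ∪ W`, `{c} ∪ W`, where
`U = {u_1,…,u_{k-1}}` and `W = {v_1,…,v_{k-1}}`. -/
noncomputable def Hk2 (k : ℕ) : Finset (Finset (Fin (2 * k + 1))) :=
  {insert 0 (Finset.univ.filter (fun x : Fin (2 * k + 1) => 3 ≤ (x : ℕ) ∧ (x : ℕ) ≤ k + 1)),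
   insert 1 (Finset.univ.filter (fun x : Fin (2 * k + 1) => 3 ≤ (x : ℕ) ∧ (x : ℕ) ≤ k + 1)),
   insert 1 (Finset.univ.filter (fun x : Fin (2 * k + 1) => k + 2 ≤ (x : ℕ))),
   insert 2 (Finset.univ.filter (fun x : Fin (2 * k + 1) => k + 2 ≤ (x : ℕ)))}

/-- The hypergraph `F(H_{k,2})` obtained from a `k`-uniform hypergraph `F` on the vertex
set `X = {x_1,…,x_t}`: take disjoint copies `{x} × Fin (2k+1)` of `H_{k,2}` for each
`x ∈ X`, identify `x` with the vertex `b = 1` of its copy, and keep all edges of the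
copies together with all edges of `F` (transported to the `b`-vertices). -/
noncomputable def FHk2 (k : ℕ) (X : Type) [Fintype X] (F : Finset (Finset X)) :
    Finset (Finset (X × Fin (2 * k + 1))) :=
  (Finset.univ : Finset X).biUnion
      (fun x => (Hk2 k).image (fun e => e.image (fun j => (x, j)))) ∪
    F.image (fun e => e.image (fun x => (x, (1 : Fin (2 * k + 1)))))

section Generic
variable [Fintype V] {H : Finset (Finset V)}

lemma mem_closedNbhd_self (H : Finset (Finset V)) (v : V) : v ∈ closedNbhd H v := by
  simp [closedNbhd]

lemma game_upper (H : Finset (Finset V)) (Inv : Finset V → Prop) (GD GS : Finset V → ℕ)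
    (hA : ∀ S, Inv S → ∀ v₀, ¬ closedNbhd H v₀ ⊆ S →
       ∃ v, ¬ closedNbhd H v ⊆ S ∧ GS (S ∪ closedNbhd H v) + 1 ≤ GD S ∧
         Inv (S ∪ closedNbhd H v))
    (hB : ∀ S, Inv S → ∀ v, ¬ closedNbhd H v ⊆ S →
       GD (S ∪ closedNbhd H v) + 1 ≤ GS S ∧ Inv (S ∪ closedNbhd H v)) :
    ∀ S, Inv S → domGameVal H true S ≤ GD S ∧ domGameVal H false S ≤ GS S := by
  intro S
  generalize hN : (Finset.univ \ S).card = N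
  induction N using Nat.strong_induction_on generalizing S with
  | _ N IH =>
  intro hInv
  constructor
  · rw [domGameVal]
    by_cases h : (Finset.univ.filter fun v => ¬ closedNbhd H v ⊆ S).Nonempty
    · simp only [dif_pos h, if_pos]
      obtain ⟨v₀, hv₀⟩ := h
      obtain ⟨v, hv, hle, hInv'⟩ := hA S hInv v₀ (Finset.mem_filter.mp hv₀).2
      have hmem : v ∈ Finset.univ.filter fun v => ¬ closedNbhd H v ⊆ S :=
        Finset.mem_filter.mpr ⟨Finset.mem_univ _, hv⟩
      have hval : domGameVal H false (S ∪ closedNbhd H v) ≤ GS (S ∪ closedNbhd H v) := by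
        have hlt : (Finset.univ \ (S ∪ closedNbhd H v)).card < N := by
          rw [← hN]; exact card_sdiff_union_lt hv
        exact (IH _ hlt _ rfl hInv').2
      calc 1 + _ ≤ 1 + domGameVal H false (S ∪ closedNbhd H v) :=
            Nat.add_le_add_left (Finset.inf'_le _ (Finset.mem_attach _ ⟨v, hmem⟩)) 1
        _ ≤ GD S := by omega
    · simp only [dif_neg h]; omega
  · rw [domGameVal]
    by_cases h : (Finset.univ.filter fun v => ¬ closedNbhd H v ⊆ S).Nonempty
    · simp only [dif_pos h, Bool.false_eq_true, if_false]
      obtain ⟨v₀, hv₀⟩ := h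
      have h1 := (hB S hInv v₀ (Finset.mem_filter.mp hv₀).2).1
      calc 1 + _ ≤ 1 + (GS S - 1) := by
            refine Nat.add_le_add_left (Finset.sup'_le _ _ ?_) 1
            rintro ⟨w, hwmem⟩ -
            show domGameVal H true (S ∪ closedNbhd H w) ≤ GS S - 1
            have hw := (Finset.mem_filter.mp hwmem).2
            obtain ⟨hle, hInv'⟩ := hB S hInv w hw
            have hlt : (Finset.univ \ (S ∪ closedNbhd H w)).card < N := by
              rw [← hN]; exact card_sdiff_union_lt hw
            have := (IH _ hlt _ rfl hInv').1
            omega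
        _ ≤ GS S := by omega
    · simp only [dif_neg h]; omega

lemma game_lower (H : Finset (Finset V)) (InvD InvS : Finset V → Prop) (PD PS : Finset V → ℕ)
    (hPDuniv : PD Finset.univ = 0)
    (hDmove : ∀ S, InvD S → ∀ v, ¬ closedNbhd H v ⊆ S →
        InvS (S ∪ closedNbhd H v) ∧ PD S ≤ PS (S ∪ closedNbhd H v) + 1)
    (hSmove : ∀ S, InvS S → 1 ≤ PS S → ∃ v, ¬ closedNbhd H v ⊆ S ∧
        InvD (S ∪ closedNbhd H v) ∧ PS S ≤ PD (S ∪ closedNbhd H v) + 1) :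
    ∀ S, (InvD S → PD S ≤ domGameVal H true S) ∧ (InvS S → PS S ≤ domGameVal H false S) := by
  intro S
  generalize hN : (Finset.univ \ S).card = N
  induction N using Nat.strong_induction_on generalizing S with
  | _ N IH =>
  constructor
  · intro hInv
    rw [domGameVal]
    by_cases h : (Finset.univ.filter fun v => ¬ closedNbhd H v ⊆ S).Nonempty
    · simp only [dif_pos h, if_pos]
      calc PD S ≤ 1 + (PD S - 1) := by omega
        _ ≤ 1 + _ := by
            refine Nat.add_le_add_left (Finset.le_inf' _ _ ?_) 1
            rintro ⟨w, hwmem⟩ -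
            show PD S - 1 ≤ domGameVal H false (S ∪ closedNbhd H w)
            have hw := (Finset.mem_filter.mp hwmem).2
            obtain ⟨hInv', hle⟩ := hDmove S hInv w hw
            have hlt : (Finset.univ \ (S ∪ closedNbhd H w)).card < N := by
              rw [← hN]; exact card_sdiff_union_lt hw
            have := (IH _ hlt _ rfl).2 hInv'
            omega
    · have hSuniv : S = Finset.univ := by
        ext q
        simp only [Finset.mem_univ, iff_true]
        by_contra hq
        exact h ⟨q, Finset.mem_filter.mpr ⟨Finset.mem_univ _,
          fun hsub => hq (hsub (mem_closedNbhd_self H q))⟩⟩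
      simp only [dif_neg h]
      rw [hSuniv, hPDuniv]
  · intro hInv
    rcases Nat.eq_zero_or_pos (PS S) with h0 | h0
    · omega
    obtain ⟨v, hv, hInv', hle⟩ := hSmove S hInv h0
    rw [domGameVal]
    have h : (Finset.univ.filter fun v => ¬ closedNbhd H v ⊆ S).Nonempty :=
      ⟨v, Finset.mem_filter.mpr ⟨Finset.mem_univ _, hv⟩⟩
    simp only [dif_pos h, Bool.false_eq_true, if_false]
    have hlt : (Finset.univ \ (S ∪ closedNbhd H v)).card < N := by
      rw [← hN]; exact card_sdiff_union_lt hv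
    have hval := (IH _ hlt _ rfl).1 hInv'
    calc PS S ≤ 1 + domGameVal H true (S ∪ closedNbhd H v) := by omega
      _ ≤ 1 + _ := Nat.add_le_add_left (Finset.le_sup'
          (f := fun w : {x // x ∈ Finset.univ.filter fun u => ¬ closedNbhd H u ⊆ S} =>
            domGameVal H true (S ∪ closedNbhd H w.1))
          (Finset.mem_attach _ ⟨v, Finset.mem_filter.mpr ⟨Finset.mem_univ _, hv⟩⟩)) 1
end Generic

section Concrete
variable {k : ℕ} {X : Type} [Fintype X] {F : Finset (Finset X)}

/-- The `u`-indices. -/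
def Ur (k : ℕ) : Finset (Fin (2*k+1)) :=
  Finset.univ.filter (fun x : Fin (2*k+1) => 3 ≤ (x:ℕ) ∧ (x:ℕ) ≤ k+1)

/-- The `w`-indices. -/
def Wr (k : ℕ) : Finset (Fin (2*k+1)) :=
  Finset.univ.filter (fun x : Fin (2*k+1) => k+2 ≤ (x:ℕ))

lemma mem_Ur {j : Fin (2*k+1)} : j ∈ Ur k ↔ 3 ≤ (j:ℕ) ∧ (j:ℕ) ≤ k+1 := by
  simp [Ur]

lemma mem_Wr {j : Fin (2*k+1)} : j ∈ Wr k ↔ k+2 ≤ (j:ℕ) := by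
  simp [Wr]

lemma val0 : (((0 : Fin (2*k+1))) : ℕ) = 0 := rfl

lemma val1 (hk : 2 ≤ k) : (((1 : Fin (2*k+1))) : ℕ) = 1 := by
  have : (1:ℕ) < 2*k+1 := by omega
  simp [Fin.val_one', Nat.mod_eq_of_lt this]

lemma val2 (hk : 2 ≤ k) : (((2 : Fin (2*k+1))) : ℕ) = 2 := by
  have h2 : (2:ℕ) < 2*k+1 := by omega
  have : ((2 : Fin (2*k+1)) : ℕ) = 2 % (2*k+1) := rfl
  rw [this, Nat.mod_eq_of_lt h2]

lemma u0_mem (hk : 2 ≤ k) : (⟨3, by omega⟩ : Fin (2*k+1)) ∈ Ur k := by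
  rw [mem_Ur]; constructor <;> simp <;> omega

lemma w0_mem (hk : 2 ≤ k) : (⟨k+2, by omega⟩ : Fin (2*k+1)) ∈ Wr k := by
  rw [mem_Wr]

lemma fz_ne_o (hk : 2 ≤ k) : (0 : Fin (2*k+1)) ≠ 1 := by
  intro h; have := congrArg (Fin.val) h; rw [val0, val1 hk] at this; omega

lemma fz_ne_t (hk : 2 ≤ k) : (0 : Fin (2*k+1)) ≠ 2 := by
  intro h; have := congrArg (Fin.val) h; rw [val0, val2 hk] at this; omega

lemma fo_ne_t (hk : 2 ≤ k) : (1 : Fin (2*k+1)) ≠ 2 := by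
  intro h; have := congrArg (Fin.val) h; rw [val1 hk, val2 hk] at this; omega

lemma zero_notMem_Ur : (0 : Fin (2*k+1)) ∉ Ur k := by
  rw [mem_Ur, val0]; omega

lemma zero_notMem_Wr (hk : 2 ≤ k) : (0 : Fin (2*k+1)) ∉ Wr k := by
  rw [mem_Wr, val0]; omega

lemma one_notMem_Ur (hk : 2 ≤ k) : (1 : Fin (2*k+1)) ∉ Ur k := by
  rw [mem_Ur, val1 hk]; omega

lemma one_notMem_Wr (hk : 2 ≤ k) : (1 : Fin (2*k+1)) ∉ Wr k := by
  rw [mem_Wr, val1 hk]; omega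

lemma two_notMem_Ur (hk : 2 ≤ k) : (2 : Fin (2*k+1)) ∉ Ur k := by
  rw [mem_Ur, val2 hk]; omega

lemma two_notMem_Wr (hk : 2 ≤ k) : (2 : Fin (2*k+1)) ∉ Wr k := by
  rw [mem_Wr, val2 hk]; omega

lemma Ur_disj_Wr {j : Fin (2*k+1)} (h1 : j ∈ Ur k) (h2 : j ∈ Wr k) : False := by
  rw [mem_Ur] at h1; rw [mem_Wr] at h2; omega

lemma jcases (hk : 2 ≤ k) (j : Fin (2*k+1)) :
    j = 0 ∨ j = 1 ∨ j = 2 ∨ j ∈ Ur k ∨ j ∈ Wr k := by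
  have hj := j.isLt
  rcases Nat.lt_or_ge (j:ℕ) 3 with h | h
  · interval_cases hv : (j:ℕ)
    · left; apply Fin.ext; rw [val0, hv]
    · right; left; apply Fin.ext; rw [val1 hk, hv]
    · right; right; left; apply Fin.ext; rw [val2 hk, hv]
  · rcases Nat.lt_or_ge (j:ℕ) (k+2) with h' | h'
    · right; right; right; left; rw [mem_Ur]; omega
    · right; right; right; right; rw [mem_Wr]; omega

lemma mem_Hk2 {e : Finset (Fin (2*k+1))} : e ∈ Hk2 k ↔
    e = insert 0 (Ur k) ∨ e = insert 1 (Ur k) ∨ e = insert 1 (Wr k) ∨ e = insert 2 (Wr k) := by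
  simp [Hk2, Ur, Wr]

lemma mem_copy_image {e₀ : Finset (Fin (2*k+1))} {x y : X} {i : Fin (2*k+1)} :
    ((y,i) ∈ e₀.image (fun j => (x,j))) ↔ (y = x ∧ i ∈ e₀) := by
  simp only [Finset.mem_image, Prod.mk.injEq]
  constructor
  · rintro ⟨a, ha, rfl, rfl⟩; exact ⟨rfl, ha⟩
  · rintro ⟨rfl, hi⟩; exact ⟨i, hi, rfl, rfl⟩

lemma mem_F_image {f : Finset X} {y : X} {i : Fin (2*k+1)} :
    ((y,i) ∈ f.image (fun z => (z,(1 : Fin (2*k+1))))) ↔ (y ∈ f ∧ i = 1) := by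
  simp only [Finset.mem_image, Prod.mk.injEq]
  constructor
  · rintro ⟨a, ha, rfl, rfl⟩; exact ⟨ha, rfl⟩
  · rintro ⟨hy, rfl⟩; exact ⟨y, hy, rfl, rfl⟩

lemma mem_FHk2 {e : Finset (X × Fin (2*k+1))} : e ∈ FHk2 k X F ↔
    (∃ x : X, ∃ e₀ ∈ Hk2 k, e = e₀.image (fun j => (x,j))) ∨
    (∃ f ∈ F, e = f.image (fun y => (y,(1 : Fin (2*k+1))))) := by
  simp only [FHk2, Finset.mem_union, Finset.mem_biUnion, Finset.mem_univ, true_and,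
    Finset.mem_image]
  constructor
  · rintro (⟨x, e₀, he₀, rfl⟩ | ⟨f, hf, rfl⟩)
    · exact Or.inl ⟨x, e₀, he₀, rfl⟩
    · exact Or.inr ⟨f, hf, rfl⟩
  · rintro (⟨x, e₀, he₀, rfl⟩ | ⟨f, hf, rfl⟩)
    · exact Or.inl ⟨x, e₀, he₀, rfl⟩
    · exact Or.inr ⟨f, hf, rfl⟩

/-- Adjacency of copies through `F`. -/
def adjF (F : Finset (Finset X)) (x y : X) : Prop := ∃ f ∈ F, x ∈ f ∧ y ∈ f

lemma adjF_symm {F : Finset (Finset X)} {x y : X} (h : adjF F x y) : adjF F y x := by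
  obtain ⟨f, hf, h1, h2⟩ := h; exact ⟨f, hf, h2, h1⟩

lemma mem_nbhd_decomp {x y : X} {j i : Fin (2*k+1)}
    (h : (y,i) ∈ closedNbhd (FHk2 k X F) (x,j)) :
    (y = x ∧ i = j) ∨
    (y = x ∧ ((i = 0 ∨ i ∈ Ur k) ∧ (j = 0 ∨ j ∈ Ur k) ∨
              (i = 1 ∨ i ∈ Ur k) ∧ (j = 1 ∨ j ∈ Ur k) ∨
              (i = 1 ∨ i ∈ Wr k) ∧ (j = 1 ∨ j ∈ Wr k) ∨
              (i = 2 ∨ i ∈ Wr k) ∧ (j = 2 ∨ j ∈ Wr k))) ∨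
    (i = 1 ∧ j = 1 ∧ adjF F x y) := by
  simp only [closedNbhd, Finset.mem_filter, Finset.mem_univ, true_and] at h
  rcases h with h | ⟨e, he, hyi, hxj⟩
  · left; exact ⟨congrArg Prod.fst h, congrArg Prod.snd h⟩
  rcases mem_FHk2.mp he with ⟨z, e₀, he₀, rfl⟩ | ⟨f, hf, rfl⟩
  · rw [mem_copy_image] at hyi hxj
    obtain ⟨rfl, hi⟩ := hyi
    obtain ⟨hxz, hj⟩ := hxj
    subst hxz
    right; left
    refine ⟨rfl, ?_⟩
    rcases mem_Hk2.mp he₀ with rfl | rfl | rfl | rfl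
    · exact Or.inl ⟨Finset.mem_insert.mp hi, Finset.mem_insert.mp hj⟩
    · exact Or.inr (Or.inl ⟨Finset.mem_insert.mp hi, Finset.mem_insert.mp hj⟩)
    · exact Or.inr (Or.inr (Or.inl ⟨Finset.mem_insert.mp hi, Finset.mem_insert.mp hj⟩))
    · exact Or.inr (Or.inr (Or.inr ⟨Finset.mem_insert.mp hi, Finset.mem_insert.mp hj⟩))
  · rw [mem_F_image] at hyi hxj
    right; right
    exact ⟨hyi.2, hxj.2, ⟨f, hf, hxj.1, hyi.1⟩⟩

lemma mem_nbhd_of_edge {x : X} {j i : Fin (2*k+1)} {e₀ : Finset (Fin (2*k+1))}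
    (he₀ : e₀ ∈ Hk2 k) (hi : i ∈ e₀) (hj : j ∈ e₀) :
    (x,i) ∈ closedNbhd (FHk2 k X F) (x,j) := by
  simp only [closedNbhd, Finset.mem_filter, Finset.mem_univ, true_and]
  right
  exact ⟨e₀.image (fun j => (x,j)), mem_FHk2.mpr (Or.inl ⟨x, e₀, he₀, rfl⟩),
    mem_copy_image.mpr ⟨rfl, hi⟩, mem_copy_image.mpr ⟨rfl, hj⟩⟩

lemma mem_nbhd_of_adjF {x y : X} (h : adjF F x y) :
    (y,(1 : Fin (2*k+1))) ∈ closedNbhd (FHk2 k X F) (x,(1 : Fin (2*k+1))) := by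
  simp only [closedNbhd, Finset.mem_filter, Finset.mem_univ, true_and]
  obtain ⟨f, hf, hx, hy⟩ := h
  right
  exact ⟨f.image (fun z => (z,(1 : Fin (2*k+1)))), mem_FHk2.mpr (Or.inr ⟨f, hf, rfl⟩),
    mem_F_image.mpr ⟨hy, rfl⟩, mem_F_image.mpr ⟨hx, rfl⟩⟩

lemma EA_mem : insert (0 : Fin (2*k+1)) (Ur k) ∈ Hk2 k := mem_Hk2.mpr (Or.inl rfl)
lemma EB_mem : insert (1 : Fin (2*k+1)) (Ur k) ∈ Hk2 k := mem_Hk2.mpr (Or.inr (Or.inl rfl))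
lemma EC_mem : insert (1 : Fin (2*k+1)) (Wr k) ∈ Hk2 k := mem_Hk2.mpr (Or.inr (Or.inr (Or.inl rfl)))
lemma ED_mem : insert (2 : Fin (2*k+1)) (Wr k) ∈ Hk2 k := mem_Hk2.mpr (Or.inr (Or.inr (Or.inr rfl)))

lemma nbhd_a (hk : 2 ≤ k) {x y : X} {i : Fin (2*k+1)} :
    ((y,i) ∈ closedNbhd (FHk2 k X F) (x,(0 : Fin (2*k+1)))) ↔
      (y = x ∧ (i = 0 ∨ i ∈ Ur k)) := by
  constructor
  · intro h
    rcases mem_nbhd_decomp h with ⟨rfl, rfl⟩ | ⟨rfl, hc⟩ | ⟨hi, hj, _⟩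
    · exact ⟨rfl, Or.inl rfl⟩
    · refine ⟨rfl, ?_⟩
      rcases hc with ⟨hi, _⟩ | ⟨_, hj⟩ | ⟨_, hj⟩ | ⟨_, hj⟩
      · exact hi
      all_goals (exfalso; rcases hj with hj | hj)
      · exact fz_ne_o hk hj
      · exact zero_notMem_Ur hj
      · exact fz_ne_o hk hj
      · exact zero_notMem_Wr hk hj
      · exact fz_ne_t hk hj
      · exact zero_notMem_Wr hk hj
    · exact absurd hj (fz_ne_o hk)
  · rintro ⟨rfl, hi | hi⟩
    · subst hi; exact mem_closedNbhd_self _ _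
    · exact mem_nbhd_of_edge EA_mem (Finset.mem_insert_of_mem hi) (Finset.mem_insert_self _ _)

lemma nbhd_c (hk : 2 ≤ k) {x y : X} {i : Fin (2*k+1)} :
    ((y,i) ∈ closedNbhd (FHk2 k X F) (x,(2 : Fin (2*k+1)))) ↔
      (y = x ∧ (i = 2 ∨ i ∈ Wr k)) := by
  constructor
  · intro h
    rcases mem_nbhd_decomp h with ⟨rfl, rfl⟩ | ⟨rfl, hc⟩ | ⟨hi, hj, _⟩
    · exact ⟨rfl, Or.inl rfl⟩
    · refine ⟨rfl, ?_⟩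
      rcases hc with ⟨_, hj⟩ | ⟨_, hj⟩ | ⟨_, hj⟩ | ⟨hi, _⟩
      · exfalso; rcases hj with hj | hj
        · exact fz_ne_t hk hj.symm
        · exact two_notMem_Ur hk hj
      · exfalso; rcases hj with hj | hj
        · exact fo_ne_t hk hj.symm
        · exact two_notMem_Ur hk hj
      · exfalso; rcases hj with hj | hj
        · exact fo_ne_t hk hj.symm
        · exact two_notMem_Wr hk hj
      · exact hi
    · exact ((fo_ne_t hk) hj.symm).elim
  · rintro ⟨rfl, hi | hi⟩
    · subst hi; exact mem_closedNbhd_self _ _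
    · exact mem_nbhd_of_edge ED_mem (Finset.mem_insert_of_mem hi) (Finset.mem_insert_self _ _)

lemma nbhd_u (hk : 2 ≤ k) {x y : X} {j i : Fin (2*k+1)} (hj : j ∈ Ur k) :
    ((y,i) ∈ closedNbhd (FHk2 k X F) (x,j)) ↔
      (y = x ∧ (i = 0 ∨ i = 1 ∨ i ∈ Ur k)) := by
  constructor
  · intro h
    rcases mem_nbhd_decomp h with ⟨rfl, rfl⟩ | ⟨rfl, hc⟩ | ⟨hi, hj', _⟩
    · exact ⟨rfl, Or.inr (Or.inr hj)⟩
    · refine ⟨rfl, ?_⟩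
      rcases hc with ⟨hi, _⟩ | ⟨hi, _⟩ | ⟨_, hj'⟩ | ⟨_, hj'⟩
      · rcases hi with hi | hi
        · exact Or.inl hi
        · exact Or.inr (Or.inr hi)
      · rcases hi with hi | hi
        · exact Or.inr (Or.inl hi)
        · exact Or.inr (Or.inr hi)
      · exfalso; rcases hj' with hj' | hj'
        · subst hj'; exact one_notMem_Ur hk hj
        · exact Ur_disj_Wr hj hj'
      · exfalso; rcases hj' with hj' | hj'
        · subst hj'; exact two_notMem_Ur hk hj
        · exact Ur_disj_Wr hj hj'
    · subst hj'; exact absurd hj (one_notMem_Ur hk)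
  · rintro ⟨rfl, hi | hi | hi⟩
    · subst hi
      exact mem_nbhd_of_edge EA_mem (Finset.mem_insert_self _ _) (Finset.mem_insert_of_mem hj)
    · subst hi
      exact mem_nbhd_of_edge EB_mem (Finset.mem_insert_self _ _) (Finset.mem_insert_of_mem hj)
    · exact mem_nbhd_of_edge EB_mem (Finset.mem_insert_of_mem hi) (Finset.mem_insert_of_mem hj)

lemma nbhd_w (hk : 2 ≤ k) {x y : X} {j i : Fin (2*k+1)} (hj : j ∈ Wr k) :
    ((y,i) ∈ closedNbhd (FHk2 k X F) (x,j)) ↔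
      (y = x ∧ (i = 1 ∨ i = 2 ∨ i ∈ Wr k)) := by
  constructor
  · intro h
    rcases mem_nbhd_decomp h with ⟨rfl, rfl⟩ | ⟨rfl, hc⟩ | ⟨hi, hj', _⟩
    · exact ⟨rfl, Or.inr (Or.inr hj)⟩
    · refine ⟨rfl, ?_⟩
      rcases hc with ⟨_, hj'⟩ | ⟨_, hj'⟩ | ⟨hi, _⟩ | ⟨hi, _⟩
      · exfalso; rcases hj' with hj' | hj'
        · subst hj'; exact zero_notMem_Wr hk hj
        · exact Ur_disj_Wr hj' hj
      · exfalso; rcases hj' with hj' | hj'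
        · subst hj'; exact one_notMem_Wr hk hj
        · exact Ur_disj_Wr hj' hj
      · rcases hi with hi | hi
        · exact Or.inl hi
        · exact Or.inr (Or.inr hi)
      · rcases hi with hi | hi
        · exact Or.inr (Or.inl hi)
        · exact Or.inr (Or.inr hi)
    · subst hj'; exact absurd hj (one_notMem_Wr hk)
  · rintro ⟨rfl, hi | hi | hi⟩
    · subst hi
      exact mem_nbhd_of_edge EC_mem (Finset.mem_insert_self _ _) (Finset.mem_insert_of_mem hj)
    · subst hi
      exact mem_nbhd_of_edge ED_mem (Finset.mem_insert_self _ _) (Finset.mem_insert_of_mem hj)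
    · exact mem_nbhd_of_edge EC_mem (Finset.mem_insert_of_mem hi) (Finset.mem_insert_of_mem hj)

lemma nbhd_b (hk : 2 ≤ k) {x y : X} {i : Fin (2*k+1)} :
    ((y,i) ∈ closedNbhd (FHk2 k X F) (x,(1 : Fin (2*k+1)))) ↔
      ((y = x ∧ (i = 1 ∨ i ∈ Ur k ∨ i ∈ Wr k)) ∨ (i = 1 ∧ adjF F x y)) := by
  constructor
  · intro h
    rcases mem_nbhd_decomp h with ⟨rfl, rfl⟩ | ⟨rfl, hc⟩ | ⟨hi, _, hadj⟩
    · exact Or.inl ⟨rfl, Or.inl rfl⟩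
    · left
      refine ⟨rfl, ?_⟩
      rcases hc with ⟨_, hj⟩ | ⟨hi, _⟩ | ⟨hi, _⟩ | ⟨_, hj⟩
      · exfalso; rcases hj with hj | hj
        · exact fz_ne_o hk hj.symm
        · exact one_notMem_Ur hk hj
      · rcases hi with hi | hi
        · exact Or.inl hi
        · exact Or.inr (Or.inl hi)
      · rcases hi with hi | hi
        · exact Or.inl hi
        · exact Or.inr (Or.inr hi)
      · exfalso; rcases hj with hj | hj
        · exact fo_ne_t hk hj
        · exact one_notMem_Wr hk hj
    · exact Or.inr ⟨hi, hadj⟩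
  · rintro (⟨rfl, hi | hi | hi⟩ | ⟨rfl, hadj⟩)
    · subst hi; exact mem_closedNbhd_self _ _
    · exact mem_nbhd_of_edge EB_mem (Finset.mem_insert_of_mem hi) (Finset.mem_insert_self _ _)
    · exact mem_nbhd_of_edge EC_mem (Finset.mem_insert_of_mem hi) (Finset.mem_insert_self _ _)
    · exact mem_nbhd_of_adjF hadj

/-! ### Invariant and structure lemmas -/

/-- The invariant: `S` is a union of closed neighborhoods. -/
def InvS (k : ℕ) {X : Type} [Fintype X] (F : Finset (Finset X))
    (S : Finset (X × Fin (2*k+1))) : Prop :=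
  ∃ T : Finset (X × Fin (2*k+1)), S = T.biUnion (fun v => closedNbhd (FHk2 k X F) v)

lemma InvS_empty : InvS k F (∅ : Finset (X × Fin (2*k+1))) := ⟨∅, by simp⟩

lemma InvS_union {S : Finset (X × Fin (2*k+1))} (h : InvS k F S) (v : X × Fin (2*k+1)) :
    InvS k F (S ∪ closedNbhd (FHk2 k X F) v) := by
  obtain ⟨T, rfl⟩ := h
  exact ⟨insert v T, by rw [Finset.biUnion_insert, Finset.union_comm]⟩

lemma InvS_mem_structure {S : Finset (X × Fin (2*k+1))} (h : InvS k F S)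
    {x : X} {j : Fin (2*k+1)} (hj : (x,j) ∈ S) :
    (∃ i : Fin (2*k+1), closedNbhd (FHk2 k X F) (x,i) ⊆ S ∧
      (x,j) ∈ closedNbhd (FHk2 k X F) (x,i)) ∨
    (∃ (y : X) (i : Fin (2*k+1)), y ≠ x ∧ closedNbhd (FHk2 k X F) (y,i) ⊆ S ∧
      (x,j) ∈ closedNbhd (FHk2 k X F) (y,i)) := by
  obtain ⟨T, rfl⟩ := h
  rw [Finset.mem_biUnion] at hj
  obtain ⟨⟨y,i⟩, hvT, hmem⟩ := hj
  by_cases hyx : y = x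
  · subst hyx
    exact Or.inl ⟨i, fun q hq => Finset.mem_biUnion.mpr ⟨(y,i), hvT, hq⟩, hmem⟩
  · exact Or.inr ⟨y, i, hyx, fun q hq => Finset.mem_biUnion.mpr ⟨(y,i), hvT, hq⟩, hmem⟩

lemma cross_copy (hk : 2 ≤ k) {x y : X} {j i : Fin (2*k+1)}
    (h : (y,i) ∈ closedNbhd (FHk2 k X F) (x,j)) (hne : y ≠ x) :
    i = 1 ∧ j = 1 ∧ adjF F x y := by
  rcases mem_nbhd_decomp h with ⟨h1, _⟩ | ⟨h1, _⟩ | h1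
  · exact absurd h1 hne
  · exact absurd h1 hne
  · exact h1

/-- If `(x,j) ∈ S` for `j ∈ Ur` but `a_x ∉ S`, then `b_x` was played. -/
lemma SL5 (hk : 2 ≤ k) {S : Finset (X × Fin (2*k+1))} (h : InvS k F S)
    {x : X} {j : Fin (2*k+1)} (hj : j ∈ Ur k) (hjS : (x,j) ∈ S)
    (ha : (x,(0 : Fin (2*k+1))) ∉ S) :
    closedNbhd (FHk2 k X F) (x,(1 : Fin (2*k+1))) ⊆ S := by
  rcases InvS_mem_structure h hjS with ⟨i, hsub, hmem⟩ | ⟨y, i, hne, hsub, hmem⟩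
  · rcases jcases hk i with rfl | rfl | rfl | hi | hi
    · exact absurd (hsub ((nbhd_a hk).mpr ⟨rfl, Or.inl rfl⟩)) ha
    · exact hsub
    · rw [nbhd_c hk] at hmem
      rcases hmem.2 with h2 | h2
      · exact absurd (h2 ▸ hj) (two_notMem_Ur hk)
      · exact absurd hj (fun hu => Ur_disj_Wr hu h2)
    · exact absurd (hsub ((nbhd_u hk hi).mpr ⟨rfl, Or.inl rfl⟩)) ha
    · rw [nbhd_w hk hi] at hmem
      rcases hmem.2 with h2 | h2 | h2
      · exact absurd (h2 ▸ hj) (one_notMem_Ur hk)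
      · exact absurd (h2 ▸ hj) (two_notMem_Ur hk)
      · exact absurd hj (fun hu => Ur_disj_Wr hu h2)
  · have := cross_copy hk hmem (fun h' => hne h'.symm)
    exact absurd (this.1 ▸ hj) (one_notMem_Ur hk)

/-- If `(x,j) ∈ S` for `j ∈ Wr` but `c_x ∉ S`, then `b_x` was played. -/
lemma SL6 (hk : 2 ≤ k) {S : Finset (X × Fin (2*k+1))} (h : InvS k F S)
    {x : X} {j : Fin (2*k+1)} (hj : j ∈ Wr k) (hjS : (x,j) ∈ S)
    (hc : (x,(2 : Fin (2*k+1))) ∉ S) :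
    closedNbhd (FHk2 k X F) (x,(1 : Fin (2*k+1))) ⊆ S := by
  rcases InvS_mem_structure h hjS with ⟨i, hsub, hmem⟩ | ⟨y, i, hne, hsub, hmem⟩
  · rcases jcases hk i with rfl | rfl | rfl | hi | hi
    · rw [nbhd_a hk] at hmem
      rcases hmem.2 with h2 | h2
      · exact absurd (h2 ▸ hj) (zero_notMem_Wr hk)
      · exact absurd hj (fun hw => Ur_disj_Wr h2 hw)
    · exact hsub
    · exact absurd (hsub ((nbhd_c hk).mpr ⟨rfl, Or.inl rfl⟩)) hc
    · rw [nbhd_u hk hi] at hmem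
      rcases hmem.2 with h2 | h2 | h2
      · exact absurd (h2 ▸ hj) (zero_notMem_Wr hk)
      · exact absurd (h2 ▸ hj) (one_notMem_Wr hk)
      · exact absurd hj (fun hw => Ur_disj_Wr h2 hw)
    · exact absurd (hsub ((nbhd_w hk hi).mpr ⟨rfl, Or.inr (Or.inl rfl)⟩)) hc
  · have := cross_copy hk hmem (fun h' => hne h'.symm)
    exact absurd (this.1 ▸ hj) (one_notMem_Wr hk)

/-- `a_x ∈ S` implies all of `U_x ⊆ S`. -/
lemma SL1 (hk : 2 ≤ k) {S : Finset (X × Fin (2*k+1))} (h : InvS k F S)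
    {x : X} (ha : (x,(0 : Fin (2*k+1))) ∈ S) :
    ∀ j ∈ Ur k, (x,j) ∈ S := by
  intro j hj
  rcases InvS_mem_structure h ha with ⟨i, hsub, hmem⟩ | ⟨y, i, hne, hsub, hmem⟩
  · rcases jcases hk i with rfl | rfl | rfl | hi | hi
    · exact hsub ((nbhd_a hk).mpr ⟨rfl, Or.inr hj⟩)
    · rw [nbhd_b hk] at hmem
      rcases hmem with ⟨_, h2 | h2 | h2⟩ | ⟨h2, _⟩
      · exact absurd h2 (fz_ne_o hk)
      · exact absurd h2 zero_notMem_Ur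
      · exact absurd h2 (zero_notMem_Wr hk)
      · exact absurd h2 (fz_ne_o hk)
    · rw [nbhd_c hk] at hmem
      rcases hmem.2 with h2 | h2
      · exact absurd h2 (fz_ne_t hk)
      · exact absurd h2 (zero_notMem_Wr hk)
    · exact hsub ((nbhd_u hk hi).mpr ⟨rfl, Or.inr (Or.inr hj)⟩)
    · rw [nbhd_w hk hi] at hmem
      rcases hmem.2 with h2 | h2 | h2
      · exact absurd h2 (fz_ne_o hk)
      · exact absurd h2 (fz_ne_t hk)
      · exact absurd h2 (zero_notMem_Wr hk)
  · have := cross_copy hk hmem (fun h' => hne h'.symm)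
    exact absurd this.1 (fz_ne_o hk)

/-- `c_x ∈ S` implies all of `W_x ⊆ S`. -/
lemma SL2 (hk : 2 ≤ k) {S : Finset (X × Fin (2*k+1))} (h : InvS k F S)
    {x : X} (hc : (x,(2 : Fin (2*k+1))) ∈ S) :
    ∀ j ∈ Wr k, (x,j) ∈ S := by
  intro j hj
  rcases InvS_mem_structure h hc with ⟨i, hsub, hmem⟩ | ⟨y, i, hne, hsub, hmem⟩
  · rcases jcases hk i with rfl | rfl | rfl | hi | hi
    · rw [nbhd_a hk] at hmem
      rcases hmem.2 with h2 | h2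
      · exact absurd h2.symm (fz_ne_t hk)
      · exact absurd h2 (two_notMem_Ur hk)
    · rw [nbhd_b hk] at hmem
      rcases hmem with ⟨_, h2 | h2 | h2⟩ | ⟨h2, _⟩
      · exact absurd h2.symm (fo_ne_t hk)
      · exact absurd h2 (two_notMem_Ur hk)
      · exact absurd h2 (two_notMem_Wr hk)
      · exact absurd h2.symm (fo_ne_t hk)
    · exact hsub ((nbhd_c hk).mpr ⟨rfl, Or.inr hj⟩)
    · rw [nbhd_u hk hi] at hmem
      rcases hmem.2 with h2 | h2 | h2
      · exact absurd h2 (fz_ne_t hk).symm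
      · exact absurd h2.symm (fo_ne_t hk)
      · exact absurd h2 (two_notMem_Ur hk)
    · exact hsub ((nbhd_w hk hi).mpr ⟨rfl, Or.inr (Or.inr hj)⟩)
  · have := cross_copy hk hmem (fun h' => hne h'.symm)
    exact absurd this.1.symm (fo_ne_t hk)

/-! ### Potentials -/

variable {k : ℕ} {X : Type} [Fintype X] {F : Finset (Finset X)}

/-- `1` if `a_x` is not yet dominated. -/
noncomputable def indA (S : Finset (X × Fin (2*k+1))) (x : X) : ℕ :=
  if (x,(0 : Fin (2*k+1))) ∈ S then 0 else 1

/-- `1` if `c_x` is not yet dominated. -/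
noncomputable def indC (S : Finset (X × Fin (2*k+1))) (x : X) : ℕ :=
  if (x,(2 : Fin (2*k+1))) ∈ S then 0 else 1

/-- Playing `b_x` is still a legal move. -/
def T3 (F : Finset (Finset X)) {k : ℕ} (S : Finset (X × Fin (2*k+1))) (x : X) : Prop :=
  ¬ closedNbhd (FHk2 k X F) (x,(1 : Fin (2*k+1))) ⊆ S

noncomputable def indT3 (F : Finset (Finset X)) {k : ℕ}
    (S : Finset (X × Fin (2*k+1))) (x : X) : ℕ :=
  if T3 F S x then 1 else 0

/-- A ripe copy. -/
def P1 (F : Finset (Finset X)) {k : ℕ} (S : Finset (X × Fin (2*k+1))) (x : X) : Prop :=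
  T3 F S x ∧ (x,(1 : Fin (2*k+1))) ∈ S ∧
    ((x,(0 : Fin (2*k+1))) ∈ S ∨ (x,(2 : Fin (2*k+1))) ∈ S)

noncomputable def indP1 (F : Finset (Finset X)) {k : ℕ}
    (S : Finset (X × Fin (2*k+1))) (x : X) : ℕ :=
  if P1 F S x then 1 else 0

noncomputable def sA (S : Finset (X × Fin (2*k+1))) : ℕ := ∑ x : X, indA S x
noncomputable def sC (S : Finset (X × Fin (2*k+1))) : ℕ := ∑ x : X, indC S x
noncomputable def sT (F : Finset (Finset X)) {k : ℕ} (S : Finset (X × Fin (2*k+1))) : ℕ :=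
  ∑ x : X, indT3 F S x
noncomputable def nP (F : Finset (Finset X)) {k : ℕ} (S : Finset (X × Fin (2*k+1))) : ℕ :=
  ∑ x : X, indP1 F S x
noncomputable def Phi (F : Finset (Finset X)) {k : ℕ} (S : Finset (X × Fin (2*k+1))) : ℕ :=
  sA S + sC S + sT F S

lemma mono_indA {S S' : Finset (X × Fin (2*k+1))} (h : S ⊆ S') (x : X) :
    indA S' x ≤ indA S x := by
  unfold indA
  by_cases hx : (x,(0 : Fin (2*k+1))) ∈ S
  · simp [hx, h hx]
  · split <;> omega

lemma mono_indC {S S' : Finset (X × Fin (2*k+1))} (h : S ⊆ S') (x : X) :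
    indC S' x ≤ indC S x := by
  unfold indC
  by_cases hx : (x,(2 : Fin (2*k+1))) ∈ S
  · simp [hx, h hx]
  · split <;> omega

lemma T3_mono {S S' : Finset (X × Fin (2*k+1))} (h : S ⊆ S') {x : X}
    (ht : T3 F S' x) : T3 F S x :=
  fun hsub => ht (hsub.trans h)

lemma mono_indT3 {S S' : Finset (X × Fin (2*k+1))} (h : S ⊆ S') (x : X) :
    indT3 F S' x ≤ indT3 F S x := by
  unfold indT3
  by_cases hx : T3 F S' x
  · simp [hx, T3_mono h hx]
  · simp [hx]

lemma pers_P1 {S S' : Finset (X × Fin (2*k+1))} (h : S ⊆ S') (x : X) :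
    indP1 F S x + indT3 F S' x ≤ indP1 F S' x + indT3 F S x := by
  unfold indP1 indT3
  by_cases hp : P1 F S x
  · have ht : T3 F S x := hp.1
    by_cases ht' : T3 F S' x
    · have hp' : P1 F S' x := ⟨ht', h hp.2.1, hp.2.2.imp (fun a => h a) (fun a => h a)⟩
      simp [hp, ht, ht', hp']
    · simp [hp, ht, ht']
  · by_cases ht' : T3 F S' x
    · have ht : T3 F S x := T3_mono h ht'
      simp only [if_neg hp, if_pos ht', if_pos ht]
      split <;> omega
    · simp only [if_neg hp, if_neg ht']
      split <;> split <;> omega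

lemma sum_succ_le {f g : X → ℕ} (h : ∀ x, f x ≤ g x) (x₀ : X) (hx : f x₀ + 1 ≤ g x₀) :
    (∑ x : X, f x) + 1 ≤ ∑ x : X, g x :=
  Nat.succ_le_of_lt (Finset.sum_lt_sum (fun i _ => h i) ⟨x₀, Finset.mem_univ _, by omega⟩)

lemma sum_add_two_le {f g : X → ℕ} (h : ∀ x, f x ≤ g x) {x₁ x₂ : X} (hne : x₁ ≠ x₂)
    (h₁ : f x₁ + 1 ≤ g x₁) (h₂ : f x₂ + 1 ≤ g x₂) :
    (∑ x : X, f x) + 2 ≤ ∑ x : X, g x := by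
  classical
  have e1 : ∑ x ∈ (Finset.univ : Finset X).erase x₁, f x + f x₁ = ∑ x : X, f x :=
    Finset.sum_erase_add _ _ (Finset.mem_univ _)
  have e2 : ∑ x ∈ (Finset.univ : Finset X).erase x₁, g x + g x₁ = ∑ x : X, g x :=
    Finset.sum_erase_add _ _ (Finset.mem_univ _)
  have hlt : (∑ x ∈ (Finset.univ : Finset X).erase x₁, f x) + 1 ≤
      ∑ x ∈ (Finset.univ : Finset X).erase x₁, g x :=
    Nat.succ_le_of_lt (Finset.sum_lt_sum (fun i _ => h i)
      ⟨x₂, Finset.mem_erase.mpr ⟨fun hc => hne hc.symm, Finset.mem_univ _⟩, by omega⟩)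
  omega

lemma legal_a_iff (hk : 2 ≤ k) {S : Finset (X × Fin (2*k+1))} (hInv : InvS k F S) {x : X}
    (hv : ¬ closedNbhd (FHk2 k X F) (x,(0 : Fin (2*k+1))) ⊆ S) :
    (x,(0 : Fin (2*k+1))) ∉ S := by
  intro ha
  apply hv
  rintro ⟨y,i⟩ hq
  rw [nbhd_a hk] at hq
  obtain ⟨rfl, hi⟩ := hq
  rcases hi with rfl | hi
  · exact ha
  · exact SL1 hk hInv ha i hi

lemma legal_c_iff (hk : 2 ≤ k) {S : Finset (X × Fin (2*k+1))} (hInv : InvS k F S) {x : X}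
    (hv : ¬ closedNbhd (FHk2 k X F) (x,(2 : Fin (2*k+1))) ⊆ S) :
    (x,(2 : Fin (2*k+1))) ∉ S := by
  intro hc
  apply hv
  rintro ⟨y,i⟩ hq
  rw [nbhd_c hk] at hq
  obtain ⟨rfl, hi⟩ := hq
  rcases hi with rfl | hi
  · exact hc
  · exact SL2 hk hInv hc i hi

/-- The key disjunction for the Staller-side upper bound. -/
lemma UB_disj (hk : 2 ≤ k) {S : Finset (X × Fin (2*k+1))} (hInv : InvS k F S)
    {v : X × Fin (2*k+1)} (hv : ¬ closedNbhd (FHk2 k X F) v ⊆ S) :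
    (Phi F (S ∪ closedNbhd (FHk2 k X F) v) + 1 ≤ Phi F S) ∨
    (nP F S + 1 ≤ nP F (S ∪ closedNbhd (FHk2 k X F) v)) := by
  obtain ⟨x, j⟩ := v
  set S' := S ∪ closedNbhd (FHk2 k X F) (x,j) with hS'
  have hsub : S ⊆ S' := Finset.subset_union_left
  have hmA := fun y => mono_indA (S := S) (S' := S') hsub y
  have hmC := fun y => mono_indC (S := S) (S' := S') hsub y
  have hmT := fun y => mono_indT3 (F := F) (S := S) (S' := S') hsub y
  have hsA : sA S' ≤ sA S := Finset.sum_le_sum (fun y _ => hmA y)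
  have hsC : sC S' ≤ sC S := Finset.sum_le_sum (fun y _ => hmC y)
  have hsT : sT F S' ≤ sT F S := Finset.sum_le_sum (fun y _ => hmT y)
  rcases jcases hk j with rfl | rfl | rfl | hj | hj
  · -- a-move
    have ha := legal_a_iff hk hInv hv
    left
    have h1 : indA S' x + 1 ≤ indA S x := by
      have hin : (x,(0 : Fin (2*k+1))) ∈ S' :=
        Finset.mem_union_right _ (mem_closedNbhd_self _ _)
      simp [indA, hin, ha]
    have h2 : sA S' + 1 ≤ sA S := sum_succ_le hmA x h1
    unfold Phi; omega
  · -- b-move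
    left
    have ht : T3 F S x := hv
    have ht' : ¬ T3 F S' x := fun hc => hc Finset.subset_union_right
    have h1 : indT3 F S' x + 1 ≤ indT3 F S x := by simp [indT3, ht, ht']
    have h2 : sT F S' + 1 ≤ sT F S := sum_succ_le hmT x h1
    unfold Phi; omega
  · -- c-move
    have hc := legal_c_iff hk hInv hv
    left
    have h1 : indC S' x + 1 ≤ indC S x := by
      have hin : (x,(2 : Fin (2*k+1))) ∈ S' :=
        Finset.mem_union_right _ (mem_closedNbhd_self _ _)
      simp [indC, hin, hc]
    have h2 : sC S' + 1 ≤ sC S := sum_succ_le hmC x h1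
    unfold Phi; omega
  · -- u-move
    by_cases ha : (x,(0 : Fin (2*k+1))) ∈ S
    · -- a already dominated: only b is new
      have hU : ∀ j' ∈ Ur k, (x,j') ∈ S := SL1 hk hInv ha
      have hb : (x,(1 : Fin (2*k+1))) ∉ S := by
        intro hb
        apply hv
        rintro ⟨y,i⟩ hq
        rw [nbhd_u hk hj] at hq
        obtain ⟨rfl, hi⟩ := hq
        rcases hi with rfl | rfl | hi
        · exact ha
        · exact hb
        · exact hU i hi
      by_cases hT' : T3 F S' x
      · by_cases hPhi : Phi F S' + 1 ≤ Phi F S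
        · exact Or.inl hPhi
        · right
          have hTeq : ∀ y, indT3 F S' y = indT3 F S y := by
            intro y
            by_contra hne
            have hstr : indT3 F S' y + 1 ≤ indT3 F S y := by
              have := hmT y; omega
            have h2 : sT F S' + 1 ≤ sT F S := sum_succ_le hmT y hstr
            apply hPhi
            unfold Phi; omega
          have hmP : ∀ y, indP1 F S y ≤ indP1 F S' y := by
            intro y
            have := pers_P1 (F := F) hsub y
            have := hTeq y
            omega
          have hb' : (x,(1 : Fin (2*k+1))) ∈ S' :=
            Finset.mem_union_right _ ((nbhd_u hk hj).mpr ⟨rfl, Or.inr (Or.inl rfl)⟩)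
          have hP' : P1 F S' x := ⟨hT', hb', Or.inl (hsub ha)⟩
          have hP : ¬ P1 F S x := fun hc => hb hc.2.1
          have hstr : indP1 F S x + 1 ≤ indP1 F S' x := by simp [indP1, hP, hP']
          exact (sum_succ_le hmP x hstr : nP F S + 1 ≤ nP F S')
      · left
        have ht : T3 F S x := fun hc => hb (hc (mem_closedNbhd_self _ _))
        have h1 : indT3 F S' x + 1 ≤ indT3 F S x := by simp [indT3, ht, hT']
        have h2 : sT F S' + 1 ≤ sT F S := sum_succ_le hmT x h1
        unfold Phi; omega
    · -- a not dominated
      left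
      have h1 : indA S' x + 1 ≤ indA S x := by
        have hin : (x,(0 : Fin (2*k+1))) ∈ S' :=
          Finset.mem_union_right _ ((nbhd_u hk hj).mpr ⟨rfl, Or.inl rfl⟩)
        simp [indA, hin, ha]
      have h2 : sA S' + 1 ≤ sA S := sum_succ_le hmA x h1
      unfold Phi; omega
  · -- w-move
    by_cases hc : (x,(2 : Fin (2*k+1))) ∈ S
    · have hW : ∀ j' ∈ Wr k, (x,j') ∈ S := SL2 hk hInv hc
      have hb : (x,(1 : Fin (2*k+1))) ∉ S := by
        intro hb
        apply hv
        rintro ⟨y,i⟩ hq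
        rw [nbhd_w hk hj] at hq
        obtain ⟨rfl, hi⟩ := hq
        rcases hi with rfl | rfl | hi
        · exact hb
        · exact hc
        · exact hW i hi
      by_cases hT' : T3 F S' x
      · by_cases hPhi : Phi F S' + 1 ≤ Phi F S
        · exact Or.inl hPhi
        · right
          have hTeq : ∀ y, indT3 F S' y = indT3 F S y := by
            intro y
            by_contra hne
            have hstr : indT3 F S' y + 1 ≤ indT3 F S y := by
              have := hmT y; omega
            have h2 : sT F S' + 1 ≤ sT F S := sum_succ_le hmT y hstr
            apply hPhi
            unfold Phi; omega
          have hmP : ∀ y, indP1 F S y ≤ indP1 F S' y := by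
            intro y
            have := pers_P1 (F := F) hsub y
            have := hTeq y
            omega
          have hb' : (x,(1 : Fin (2*k+1))) ∈ S' :=
            Finset.mem_union_right _ ((nbhd_w hk hj).mpr ⟨rfl, Or.inl rfl⟩)
          have hP' : P1 F S' x := ⟨hT', hb', Or.inr (hsub hc)⟩
          have hP : ¬ P1 F S x := fun hcc => hb hcc.2.1
          have hstr : indP1 F S x + 1 ≤ indP1 F S' x := by simp [indP1, hP, hP']
          exact (sum_succ_le hmP x hstr : nP F S + 1 ≤ nP F S')
      · left
        have ht : T3 F S x := fun hcc => hb (hcc (mem_closedNbhd_self _ _))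
        have h1 : indT3 F S' x + 1 ≤ indT3 F S x := by simp [indT3, ht, hT']
        have h2 : sT F S' + 1 ≤ sT F S := sum_succ_le hmT x h1
        unfold Phi; omega
    · left
      have h1 : indC S' x + 1 ≤ indC S x := by
        have hin : (x,(2 : Fin (2*k+1))) ∈ S' :=
          Finset.mem_union_right _ ((nbhd_w hk hj).mpr ⟨rfl, Or.inr (Or.inl rfl)⟩)
        simp [indC, hin, hc]
      have h2 : sC S' + 1 ≤ sC S := sum_succ_le hmC x h1
      unfold Phi; omega

/-- Staller-side upper bound condition. -/
lemma UB_master (hk : 2 ≤ k) {S : Finset (X × Fin (2*k+1))} (hInv : InvS k F S)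
    {v : X × Fin (2*k+1)} (hv : ¬ closedNbhd (FHk2 k X F) v ⊆ S) :
    Phi F (S ∪ closedNbhd (FHk2 k X F) v) + nP F S / 2 + 1 ≤
      Phi F S + (nP F (S ∪ closedNbhd (FHk2 k X F) v) + 1) / 2 := by
  set S' := S ∪ closedNbhd (FHk2 k X F) v with hS'
  show Phi F S' + nP F S / 2 + 1 ≤ Phi F S + (nP F S' + 1) / 2
  have hsub : S ⊆ S' := Finset.subset_union_left
  have hsA : sA S' ≤ sA S := Finset.sum_le_sum (fun y _ => mono_indA hsub y)
  have hsC : sC S' ≤ sC S := Finset.sum_le_sum (fun y _ => mono_indC hsub y)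
  have hsT : sT F S' ≤ sT F S := Finset.sum_le_sum (fun y _ => mono_indT3 hsub y)
  have hpers : nP F S + sT F S' ≤ nP F S' + sT F S := by
    have h1 : ∑ y : X, (indP1 F S y + indT3 F S' y) ≤
        ∑ y : X, (indP1 F S' y + indT3 F S y) :=
      Finset.sum_le_sum (fun y _ => pers_P1 hsub y)
    rw [Finset.sum_add_distrib, Finset.sum_add_distrib] at h1
    exact h1
  have hdisj : (Phi F S' + 1 ≤ Phi F S) ∨ (nP F S + 1 ≤ nP F S') := UB_disj hk hInv hv
  have hPhi : Phi F S = sA S + sC S + sT F S := rfl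
  have hPhi' : Phi F S' = sA S' + sC S' + sT F S' := rfl
  omega

/-! ### helper sum lemmas -/

lemma sA_mono {S S' : Finset (X × Fin (2*k+1))} (h : S ⊆ S') : sA S' ≤ sA S :=
  Finset.sum_le_sum fun y _ => mono_indA h y

lemma sC_mono {S S' : Finset (X × Fin (2*k+1))} (h : S ⊆ S') : sC S' ≤ sC S :=
  Finset.sum_le_sum fun y _ => mono_indC h y

lemma sT_mono {S S' : Finset (X × Fin (2*k+1))} (h : S ⊆ S') : sT F S' ≤ sT F S :=
  Finset.sum_le_sum fun y _ => mono_indT3 h y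

lemma pers_sum {S S' : Finset (X × Fin (2*k+1))} (h : S ⊆ S') :
    nP F S + sT F S' ≤ nP F S' + sT F S := by
  have h1 : ∑ y : X, (indP1 F S y + indT3 F S' y) ≤
      ∑ y : X, (indP1 F S' y + indT3 F S y) :=
    Finset.sum_le_sum (fun y _ => pers_P1 h y)
  rw [Finset.sum_add_distrib, Finset.sum_add_distrib] at h1
  exact h1

lemma T3_of_b {S : Finset (X × Fin (2*k+1))} {x : X}
    (hb : (x,(1 : Fin (2*k+1))) ∉ S) : T3 F S x :=
  fun hsub => hb (hsub (mem_closedNbhd_self _ _))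

lemma slack_point {S S' : Finset (X × Fin (2*k+1))} {y : X}
    (hb : ¬ P1 F S y) (ht : T3 F S y) (himp : T3 F S' y → P1 F S' y) :
    indP1 F S y + indT3 F S' y + 1 ≤ indP1 F S' y + indT3 F S y := by
  unfold indP1 indT3
  by_cases ht' : T3 F S' y
  · simp [hb, ht, ht', himp ht']
  · simp only [if_neg hb, if_neg ht', if_pos ht]
    split <;> omega

lemma pers_sum_slack1 {S S' : Finset (X × Fin (2*k+1))} (h : S ⊆ S') {y : X}
    (hb : ¬ P1 F S y) (ht : T3 F S y) (himp : T3 F S' y → P1 F S' y) :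
    nP F S + sT F S' + 1 ≤ nP F S' + sT F S := by
  have h1 : (∑ z : X, (indP1 F S z + indT3 F S' z)) + 1 ≤
      ∑ z : X, (indP1 F S' z + indT3 F S z) :=
    sum_succ_le (fun z => pers_P1 h z) y (slack_point hb ht himp)
  rw [Finset.sum_add_distrib, Finset.sum_add_distrib] at h1
  exact h1

lemma pers_sum_slack2 {S S' : Finset (X × Fin (2*k+1))} (h : S ⊆ S') {y₁ y₂ : X}
    (hne : y₁ ≠ y₂)
    (hb₁ : ¬ P1 F S y₁) (ht₁ : T3 F S y₁) (himp₁ : T3 F S' y₁ → P1 F S' y₁)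
    (hb₂ : ¬ P1 F S y₂) (ht₂ : T3 F S y₂) (himp₂ : T3 F S' y₂ → P1 F S' y₂) :
    nP F S + sT F S' + 2 ≤ nP F S' + sT F S := by
  have h1 : (∑ z : X, (indP1 F S z + indT3 F S' z)) + 2 ≤
      ∑ z : X, (indP1 F S' z + indT3 F S z) :=
    sum_add_two_le (fun z => pers_P1 h z) hne
      (slack_point hb₁ ht₁ himp₁) (slack_point hb₂ ht₂ himp₂)
  rw [Finset.sum_add_distrib, Finset.sum_add_distrib] at h1
  exact h1

lemma sT_strict1 {S S' : Finset (X × Fin (2*k+1))} (h : S ⊆ S') {x : X}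
    (ht : T3 F S x) (ht' : ¬ T3 F S' x) : sT F S' + 1 ≤ sT F S :=
  sum_succ_le (fun y => mono_indT3 h y) x (by simp [indT3, ht, ht'])

lemma sT_strict2 {S S' : Finset (X × Fin (2*k+1))} (h : S ⊆ S') {x z : X} (hne : x ≠ z)
    (ht : T3 F S x) (ht' : ¬ T3 F S' x) (hz : T3 F S z) (hz' : ¬ T3 F S' z) :
    sT F S' + 2 ≤ sT F S :=
  sum_add_two_le (fun y => mono_indT3 h y) hne
    (by simp [indT3, ht, ht']) (by simp [indT3, hz, hz'])

lemma sA_strict {S S' : Finset (X × Fin (2*k+1))} (h : S ⊆ S') {x : X}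
    (ha : (x,(0 : Fin (2*k+1))) ∉ S) (ha' : (x,(0 : Fin (2*k+1))) ∈ S') :
    sA S' + 1 ≤ sA S :=
  sum_succ_le (fun y => mono_indA h y) x (by simp [indA, ha, ha'])

lemma sC_strict {S S' : Finset (X × Fin (2*k+1))} (h : S ⊆ S') {x : X}
    (hc : (x,(2 : Fin (2*k+1))) ∉ S) (hc' : (x,(2 : Fin (2*k+1))) ∈ S') :
    sC S' + 1 ≤ sC S :=
  sum_succ_le (fun y => mono_indC h y) x (by simp [indC, hc, hc'])

lemma exists_P1 {S : Finset (X × Fin (2*k+1))} (h : 1 ≤ nP F S) : ∃ x, P1 F S x := by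
  by_contra hc
  push_neg at hc
  have : nP F S = 0 := Finset.sum_eq_zero (fun x _ => by simp [indP1, hc x])
  omega

/-- Dominator's witness move. -/
lemma UA_master (hk : 2 ≤ k) {S : Finset (X × Fin (2*k+1))} (hInv : InvS k F S)
    {v₀ : X × Fin (2*k+1)} (hv₀ : ¬ closedNbhd (FHk2 k X F) v₀ ⊆ S) :
    ∃ v, ¬ closedNbhd (FHk2 k X F) v ⊆ S ∧
      Phi F (S ∪ closedNbhd (FHk2 k X F) v) + (nP F S + 1) / 2 + 1 ≤
        Phi F S + nP F (S ∪ closedNbhd (FHk2 k X F) v) / 2 := by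
  by_cases hB1 : ∃ y : X, (y,(0 : Fin (2*k+1))) ∉ S ∧ (y,(1 : Fin (2*k+1))) ∉ S
  · obtain ⟨y, ha, hb⟩ := hB1
    set u0 : Fin (2*k+1) := ⟨3, by omega⟩ with hu0
    refine ⟨(y, u0), ?_, ?_⟩
    · intro hsub
      exact ha (hsub ((nbhd_u hk (u0_mem hk)).mpr ⟨rfl, Or.inl rfl⟩))
    set S' := S ∪ closedNbhd (FHk2 k X F) (y, u0) with hS'
    show Phi F S' + (nP F S + 1) / 2 + 1 ≤ Phi F S + nP F S' / 2
    have hsub : S ⊆ S' := Finset.subset_union_left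
    have hb' : (y,(1 : Fin (2*k+1))) ∈ S' :=
      Finset.mem_union_right _ ((nbhd_u hk (u0_mem hk)).mpr ⟨rfl, Or.inr (Or.inl rfl)⟩)
    have ha' : (y,(0 : Fin (2*k+1))) ∈ S' :=
      Finset.mem_union_right _ ((nbhd_u hk (u0_mem hk)).mpr ⟨rfl, Or.inl rfl⟩)
    have hAs : sA S' + 1 ≤ sA S := sA_strict hsub ha ha'
    have hCs : sC S' ≤ sC S := sC_mono hsub
    have hTs : sT F S' ≤ sT F S := sT_mono hsub
    have hsl : nP F S + sT F S' + 1 ≤ nP F S' + sT F S :=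
      pers_sum_slack1 hsub (fun hc => hb hc.2.1) (T3_of_b hb)
        (fun ht' => ⟨ht', hb', Or.inl ha'⟩)
    have hPhi : Phi F S = sA S + sC S + sT F S := rfl
    have hPhi' : Phi F S' = sA S' + sC S' + sT F S' := rfl
    omega
  by_cases hB2 : ∃ y : X, (y,(2 : Fin (2*k+1))) ∉ S ∧ (y,(1 : Fin (2*k+1))) ∉ S
  · obtain ⟨y, hc, hb⟩ := hB2
    set w0 : Fin (2*k+1) := ⟨k+2, by omega⟩ with hw0
    refine ⟨(y, w0), ?_, ?_⟩
    · intro hsub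
      exact hc (hsub ((nbhd_w hk (w0_mem hk)).mpr ⟨rfl, Or.inr (Or.inl rfl)⟩))
    set S' := S ∪ closedNbhd (FHk2 k X F) (y, w0) with hS'
    show Phi F S' + (nP F S + 1) / 2 + 1 ≤ Phi F S + nP F S' / 2
    have hsub : S ⊆ S' := Finset.subset_union_left
    have hb' : (y,(1 : Fin (2*k+1))) ∈ S' :=
      Finset.mem_union_right _ ((nbhd_w hk (w0_mem hk)).mpr ⟨rfl, Or.inl rfl⟩)
    have hc' : (y,(2 : Fin (2*k+1))) ∈ S' :=
      Finset.mem_union_right _ ((nbhd_w hk (w0_mem hk)).mpr ⟨rfl, Or.inr (Or.inl rfl)⟩)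
    have hCs : sC S' + 1 ≤ sC S := sC_strict hsub hc hc'
    have hAs : sA S' ≤ sA S := sA_mono hsub
    have hTs : sT F S' ≤ sT F S := sT_mono hsub
    have hsl : nP F S + sT F S' + 1 ≤ nP F S' + sT F S :=
      pers_sum_slack1 hsub (fun hcc => hb hcc.2.1) (T3_of_b hb)
        (fun ht' => ⟨ht', hb', Or.inr hc'⟩)
    have hPhi : Phi F S = sA S + sC S + sT F S := rfl
    have hPhi' : Phi F S' = sA S' + sC S' + sT F S' := rfl
    omega
  -- Now every copy with undominated b has both a and c dominated.
  push_neg at hB1 hB2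
  have H1 : ∀ y : X, (y,(1 : Fin (2*k+1))) ∉ S →
      (y,(0 : Fin (2*k+1))) ∈ S ∧ (y,(2 : Fin (2*k+1))) ∈ S := by
    intro y hb
    constructor
    · by_contra ha; exact hb (by_contra fun hb' => (hb (absurd hb' (by simp [hB1 y ha]))))
    · by_contra hc; exact hb (by_contra fun hb' => (hb (absurd hb' (by simp [hB2 y hc]))))
  rcases Nat.eq_zero_or_pos (nP F S) with hn0 | hn1
  · -- no ripe copies: any 1-drop move suffices
    obtain ⟨⟨y, i⟩, hmem, hnot⟩ := Finset.not_subset.mp hv₀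
    have key : ∃ v, ¬ closedNbhd (FHk2 k X F) v ⊆ S ∧
        Phi F (S ∪ closedNbhd (FHk2 k X F) v) + 1 ≤ Phi F S := by
      rcases jcases hk i with rfl | rfl | rfl | hi | hi
      · refine ⟨(y, 0), fun hsub => hnot (hsub (mem_closedNbhd_self _ _)), ?_⟩
        set S' := S ∪ closedNbhd (FHk2 k X F) (y, (0 : Fin (2*k+1)))
        have hsub : S ⊆ S' := Finset.subset_union_left
        have hAs : sA S' + 1 ≤ sA S := sA_strict hsub hnot
          (Finset.mem_union_right _ (mem_closedNbhd_self _ _))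
        have hCs : sC S' ≤ sC S := sC_mono hsub
        have hTs : sT F S' ≤ sT F S := sT_mono hsub
        have hPhi : Phi F S = sA S + sC S + sT F S := rfl
        have hPhi' : Phi F S' = sA S' + sC S' + sT F S' := rfl
        omega
      · refine ⟨(y, 1), fun hsub => hnot (hsub (mem_closedNbhd_self _ _)), ?_⟩
        set S' := S ∪ closedNbhd (FHk2 k X F) (y, (1 : Fin (2*k+1)))
        have hsub : S ⊆ S' := Finset.subset_union_left
        have hTs : sT F S' + 1 ≤ sT F S := sT_strict1 hsub (T3_of_b hnot)
          (fun hcc => hcc Finset.subset_union_right)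
        have hAs : sA S' ≤ sA S := sA_mono hsub
        have hCs : sC S' ≤ sC S := sC_mono hsub
        have hPhi : Phi F S = sA S + sC S + sT F S := rfl
        have hPhi' : Phi F S' = sA S' + sC S' + sT F S' := rfl
        omega
      · refine ⟨(y, 2), fun hsub => hnot (hsub (mem_closedNbhd_self _ _)), ?_⟩
        set S' := S ∪ closedNbhd (FHk2 k X F) (y, (2 : Fin (2*k+1)))
        have hsub : S ⊆ S' := Finset.subset_union_left
        have hCs : sC S' + 1 ≤ sC S := sC_strict hsub hnot
          (Finset.mem_union_right _ (mem_closedNbhd_self _ _))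
        have hAs : sA S' ≤ sA S := sA_mono hsub
        have hTs : sT F S' ≤ sT F S := sT_mono hsub
        have hPhi : Phi F S = sA S + sC S + sT F S := rfl
        have hPhi' : Phi F S' = sA S' + sC S' + sT F S' := rfl
        omega
      · -- i ∈ Ur: then a_y ∉ S
        have ha : (y,(0 : Fin (2*k+1))) ∉ S := fun haS => hnot (SL1 hk hInv haS i hi)
        refine ⟨(y, 0), fun hsub => ha (hsub (mem_closedNbhd_self _ _)), ?_⟩
        set S' := S ∪ closedNbhd (FHk2 k X F) (y, (0 : Fin (2*k+1)))
        have hsub : S ⊆ S' := Finset.subset_union_left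
        have hAs : sA S' + 1 ≤ sA S := sA_strict hsub ha
          (Finset.mem_union_right _ (mem_closedNbhd_self _ _))
        have hCs : sC S' ≤ sC S := sC_mono hsub
        have hTs : sT F S' ≤ sT F S := sT_mono hsub
        have hPhi : Phi F S = sA S + sC S + sT F S := rfl
        have hPhi' : Phi F S' = sA S' + sC S' + sT F S' := rfl
        omega
      · have hc : (y,(2 : Fin (2*k+1))) ∉ S := fun hcS => hnot (SL2 hk hInv hcS i hi)
        refine ⟨(y, 2), fun hsub => hc (hsub (mem_closedNbhd_self _ _)), ?_⟩
        set S' := S ∪ closedNbhd (FHk2 k X F) (y, (2 : Fin (2*k+1)))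
        have hsub : S ⊆ S' := Finset.subset_union_left
        have hCs : sC S' + 1 ≤ sC S := sC_strict hsub hc
          (Finset.mem_union_right _ (mem_closedNbhd_self _ _))
        have hAs : sA S' ≤ sA S := sA_mono hsub
        have hTs : sT F S' ≤ sT F S := sT_mono hsub
        have hPhi : Phi F S = sA S + sC S + sT F S := rfl
        have hPhi' : Phi F S' = sA S' + sC S' + sT F S' := rfl
        omega
    obtain ⟨v, hv, hineq⟩ := key
    refine ⟨v, hv, ?_⟩
    have h1 : (nP F S + 1) / 2 = 0 := by omega
    omega
  -- a ripe copy exists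
  obtain ⟨x, hP1x⟩ := exists_P1 hn1
  by_cases hB3a : ∃ z₁ z₂ : X, z₁ ≠ z₂ ∧ adjF F z₁ z₂ ∧
      (z₁,(1 : Fin (2*k+1))) ∉ S ∧ (z₂,(1 : Fin (2*k+1))) ∉ S
  · obtain ⟨z₁, z₂, hne, hadj, hb₁, hb₂⟩ := hB3a
    refine ⟨(z₁, 1), T3_of_b hb₁, ?_⟩
    set S' := S ∪ closedNbhd (FHk2 k X F) (z₁, (1 : Fin (2*k+1))) with hS'
    show Phi F S' + (nP F S + 1) / 2 + 1 ≤ Phi F S + nP F S' / 2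
    have hsub : S ⊆ S' := Finset.subset_union_left
    have hb₂' : (z₂,(1 : Fin (2*k+1))) ∈ S' :=
      Finset.mem_union_right _ ((nbhd_b hk).mpr (Or.inr ⟨rfl, hadj⟩))
    have hTs : sT F S' + 1 ≤ sT F S :=
      sT_strict1 hsub (T3_of_b hb₁) (fun hcc => hcc Finset.subset_union_right)
    have hsl : nP F S + sT F S' + 2 ≤ nP F S' + sT F S := by
      refine pers_sum_slack2 hsub hne (fun hcc => hb₁ hcc.2.1) (T3_of_b hb₁)
        (fun ht' => absurd Finset.subset_union_right ht')
        (fun hcc => hb₂ hcc.2.1) (T3_of_b hb₂) ?_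
      intro ht'
      exact ⟨ht', hb₂', Or.inl (hsub (H1 z₂ hb₂).1)⟩
    have hAs : sA S' ≤ sA S := sA_mono hsub
    have hCs : sC S' ≤ sC S := sC_mono hsub
    have hPhi : Phi F S = sA S + sC S + sT F S := rfl
    have hPhi' : Phi F S' = sA S' + sC S' + sT F S' := rfl
    omega
  by_cases hB3b : ∃ z : X, adjF F x z ∧ (z,(1 : Fin (2*k+1))) ∉ S
  · obtain ⟨z, hadj, hbz⟩ := hB3b
    refine ⟨(x, 1), hP1x.1, ?_⟩
    set S' := S ∪ closedNbhd (FHk2 k X F) (x, (1 : Fin (2*k+1))) with hS'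
    show Phi F S' + (nP F S + 1) / 2 + 1 ≤ Phi F S + nP F S' / 2
    have hsub : S ⊆ S' := Finset.subset_union_left
    have hnex : x ≠ z := fun hxz => hbz (hxz ▸ hP1x.2.1)
    have hbz' : (z,(1 : Fin (2*k+1))) ∈ S' :=
      Finset.mem_union_right _ ((nbhd_b hk).mpr (Or.inr ⟨rfl, hadj⟩))
    have hTz' : ¬ T3 F S' z := by
      intro hT
      apply hT
      rintro ⟨y, i⟩ hq
      rcases (nbhd_b hk).mp hq with ⟨heq, hi | hi | hi⟩ | ⟨rfl, hadj'⟩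
      · rw [heq, hi]; exact hbz'
      · rw [heq]; exact hsub (SL1 hk hInv (H1 z hbz).1 i hi)
      · rw [heq]; exact hsub (SL2 hk hInv (H1 z hbz).2 i hi)
      · by_cases hyS : (y,(1 : Fin (2*k+1))) ∈ S
        · exact hsub hyS
        · by_cases hyz : z = y
          · exact hyz ▸ hbz'
          · exact absurd ⟨z, y, hyz, hadj', hbz, hyS⟩ hB3a
    have hTs : sT F S' + 2 ≤ sT F S :=
      sT_strict2 hsub hnex hP1x.1 (fun hcc => hcc Finset.subset_union_right)
        (T3_of_b hbz) hTz'
    have hsl : nP F S + sT F S' + 1 ≤ nP F S' + sT F S :=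
      pers_sum_slack1 hsub (fun hcc => hbz hcc.2.1) (T3_of_b hbz)
        (fun ht' => absurd ht' hTz')
    have hAs : sA S' ≤ sA S := sA_mono hsub
    have hCs : sC S' ≤ sC S := sC_mono hsub
    have hPhi : Phi F S = sA S + sC S + sT F S := rfl
    have hPhi' : Phi F S' = sA S' + sC S' + sT F S' := rfl
    omega
  -- B3c : all neighbours of x have dominated b; T3 x is local
  push_neg at hB3b
  obtain ⟨⟨y, i⟩, hmem, hnot⟩ := Finset.not_subset.mp hP1x.1
  rcases (nbhd_b hk).mp hmem with ⟨heq, hi | hi | hi⟩ | ⟨rfl, hadj'⟩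
  · rw [heq, hi] at hnot; exact absurd hP1x.2.1 hnot
  · -- i ∈ Ur undominated: u-play on x
    rw [heq] at hnot
    have ha : (x,(0 : Fin (2*k+1))) ∉ S := fun haS => hnot (SL1 hk hInv haS i hi)
    have hcS : (x,(2 : Fin (2*k+1))) ∈ S := hP1x.2.2.resolve_left ha
    refine ⟨(x, ⟨3, by omega⟩), ?_, ?_⟩
    · intro hsub
      exact ha (hsub ((nbhd_u hk (u0_mem hk)).mpr ⟨rfl, Or.inl rfl⟩))
    set S' := S ∪ closedNbhd (FHk2 k X F) (x, (⟨3, by omega⟩ : Fin (2*k+1))) with hS'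
    show Phi F S' + (nP F S + 1) / 2 + 1 ≤ Phi F S + nP F S' / 2
    have hsub : S ⊆ S' := Finset.subset_union_left
    have hAs : sA S' + 1 ≤ sA S := sA_strict hsub ha
      (Finset.mem_union_right _ ((nbhd_u hk (u0_mem hk)).mpr ⟨rfl, Or.inl rfl⟩))
    have hTx' : ¬ T3 F S' x := by
      intro hT
      apply hT
      rintro ⟨y', i'⟩ hq
      rcases (nbhd_b hk).mp hq with ⟨heq, hi' | hi' | hi'⟩ | ⟨rfl, hadj''⟩
      · rw [heq, hi']; exact hsub hP1x.2.1
      · rw [heq]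
        exact Finset.mem_union_right _ ((nbhd_u hk (u0_mem hk)).mpr ⟨rfl, Or.inr (Or.inr hi')⟩)
      · rw [heq]; exact hsub (SL2 hk hInv hcS i' hi')
      · exact hsub (hB3b y' hadj'')
    have hTs : sT F S' + 1 ≤ sT F S := sT_strict1 hsub hP1x.1 hTx'
    have hCs : sC S' ≤ sC S := sC_mono hsub
    have hpers : nP F S + sT F S' ≤ nP F S' + sT F S := pers_sum hsub
    have hPhi : Phi F S = sA S + sC S + sT F S := rfl
    have hPhi' : Phi F S' = sA S' + sC S' + sT F S' := rfl
    omega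
  · -- i ∈ Wr undominated: w-play on x
    rw [heq] at hnot
    have hc : (x,(2 : Fin (2*k+1))) ∉ S := fun hcS => hnot (SL2 hk hInv hcS i hi)
    have haS : (x,(0 : Fin (2*k+1))) ∈ S := hP1x.2.2.resolve_right hc
    refine ⟨(x, ⟨k+2, by omega⟩), ?_, ?_⟩
    · intro hsub
      exact hc (hsub ((nbhd_w hk (w0_mem hk)).mpr ⟨rfl, Or.inr (Or.inl rfl)⟩))
    set S' := S ∪ closedNbhd (FHk2 k X F) (x, (⟨k+2, by omega⟩ : Fin (2*k+1))) with hS'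
    show Phi F S' + (nP F S + 1) / 2 + 1 ≤ Phi F S + nP F S' / 2
    have hsub : S ⊆ S' := Finset.subset_union_left
    have hCs : sC S' + 1 ≤ sC S := sC_strict hsub hc
      (Finset.mem_union_right _ ((nbhd_w hk (w0_mem hk)).mpr ⟨rfl, Or.inr (Or.inl rfl)⟩))
    have hTx' : ¬ T3 F S' x := by
      intro hT
      apply hT
      rintro ⟨y', i'⟩ hq
      rcases (nbhd_b hk).mp hq with ⟨heq, hi' | hi' | hi'⟩ | ⟨rfl, hadj''⟩
      · rw [heq, hi']; exact hsub hP1x.2.1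
      · rw [heq]; exact hsub (SL1 hk hInv haS i' hi')
      · rw [heq]
        exact Finset.mem_union_right _ ((nbhd_w hk (w0_mem hk)).mpr ⟨rfl, Or.inr (Or.inr hi')⟩)
      · exact hsub (hB3b y' hadj'')
    have hTs : sT F S' + 1 ≤ sT F S := sT_strict1 hsub hP1x.1 hTx'
    have hAs : sA S' ≤ sA S := sA_mono hsub
    have hpers : nP F S + sT F S' ≤ nP F S' + sT F S := pers_sum hsub
    have hPhi : Phi F S = sA S + sC S + sT F S := rfl
    have hPhi' : Phi F S' = sA S' + sC S' + sT F S' := rfl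
    omega
  · -- adjacent undominated b: contradicts ¬hB3b
    exact absurd (hB3b y hadj') hnot

/-! ### Lower bound potential -/

/-- Some vertex of `N[b_x]` inside the copy of `x` is undominated. -/
def LocT (S : Finset (X × Fin (2*k+1))) (x : X) : Prop :=
  (x,(1 : Fin (2*k+1))) ∉ S ∨ (∃ j ∈ Ur k, (x,j) ∉ S) ∨ (∃ j ∈ Wr k, (x,j) ∉ S)

noncomputable def thr (S : Finset (X × Fin (2*k+1))) (x : X) : ℕ :=
  if (¬((x,(0 : Fin (2*k+1))) ∈ S ∧ (x,(2 : Fin (2*k+1))) ∈ S)) ∧ LocT S x then 1 else 0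

noncomputable def indF (S : Finset (X × Fin (2*k+1))) (x : X) : ℕ :=
  indA S x + indC S x + thr S x

noncomputable def psi (S : Finset (X × Fin (2*k+1))) : ℕ := ∑ x : X, indF S x

def D2 (S : Finset (X × Fin (2*k+1))) (x : X) : Prop :=
  (((x,(0 : Fin (2*k+1))) ∈ S ∧ (x,(2 : Fin (2*k+1))) ∉ S) ∨
   ((x,(0 : Fin (2*k+1))) ∉ S ∧ (x,(2 : Fin (2*k+1))) ∈ S)) ∧ LocT S x

noncomputable def indD2 (S : Finset (X × Fin (2*k+1))) (x : X) : ℕ := if D2 S x then 1 else 0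

noncomputable def sD2 (S : Finset (X × Fin (2*k+1))) : ℕ := ∑ x : X, indD2 S x

lemma LocT_legal (hk : 2 ≤ k) {S : Finset (X × Fin (2*k+1))} {x : X} (h : LocT S x) :
    ¬ closedNbhd (FHk2 k X F) (x,(1 : Fin (2*k+1))) ⊆ S := by
  intro hsub
  rcases h with hb | ⟨j, hj, hnot⟩ | ⟨j, hj, hnot⟩
  · exact hb (hsub (mem_closedNbhd_self _ _))
  · exact hnot (hsub ((nbhd_b hk).mpr (Or.inl ⟨rfl, Or.inr (Or.inl hj)⟩)))
  · exact hnot (hsub ((nbhd_b hk).mpr (Or.inl ⟨rfl, Or.inr (Or.inr hj)⟩)))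

lemma notLocT_after_b (hk : 2 ≤ k) {S : Finset (X × Fin (2*k+1))} {x : X} :
    ¬ LocT (S ∪ closedNbhd (FHk2 k X F) (x,(1 : Fin (2*k+1)))) x := by
  intro h
  rcases h with hb | ⟨j, hj, hnot⟩ | ⟨j, hj, hnot⟩
  · exact hb (Finset.mem_union_right _ (mem_closedNbhd_self _ _))
  · exact hnot (Finset.mem_union_right _ ((nbhd_b hk).mpr (Or.inl ⟨rfl, Or.inr (Or.inl hj)⟩)))
  · exact hnot (Finset.mem_union_right _ ((nbhd_b hk).mpr (Or.inl ⟨rfl, Or.inr (Or.inr hj)⟩)))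

/-- If `c_x ∉ S` then local availability forces an undominated `w`-vertex. -/
lemma loc_w (hk : 2 ≤ k) {S : Finset (X × Fin (2*k+1))} (hInv : InvS k F S) {x : X}
    (hc : (x,(2 : Fin (2*k+1))) ∉ S) (hl : LocT S x) :
    ∃ j ∈ Wr k, (x,j) ∉ S := by
  by_contra hcon
  push_neg at hcon
  have hW : ∀ j ∈ Wr k, (x,j) ∈ S := fun j hj => hcon j hj
  have hNb : closedNbhd (FHk2 k X F) (x,(1 : Fin (2*k+1))) ⊆ S :=
    SL6 hk hInv (w0_mem hk) (hW _ (w0_mem hk)) hc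
  exact LocT_legal hk hl hNb

lemma loc_u (hk : 2 ≤ k) {S : Finset (X × Fin (2*k+1))} (hInv : InvS k F S) {x : X}
    (ha : (x,(0 : Fin (2*k+1))) ∉ S) (hl : LocT S x) :
    ∃ j ∈ Ur k, (x,j) ∉ S := by
  by_contra hcon
  push_neg at hcon
  have hU : ∀ j ∈ Ur k, (x,j) ∈ S := fun j hj => hcon j hj
  have hNb : closedNbhd (FHk2 k X F) (x,(1 : Fin (2*k+1))) ⊆ S :=
    SL5 hk hInv (u0_mem hk) (hU _ (u0_mem hk)) ha
  exact LocT_legal hk hl hNb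

lemma keep_of_notMem {S : Finset (X × Fin (2*k+1))} {q v : X × Fin (2*k+1)}
    (hq : q ∉ closedNbhd (FHk2 k X F) v) :
    (q ∈ S ∪ closedNbhd (FHk2 k X F) v ↔ q ∈ S) := by
  constructor
  · intro h
    rcases Finset.mem_union.mp h with h | h
    · exact h
    · exact absurd h hq
  · exact fun h => Finset.mem_union_left _ h

lemma sum_drop_one {f g : X → ℕ} (x₀ : X) (h : ∀ y, y ≠ x₀ → f y = g y)
    (hx : f x₀ ≤ g x₀ + 1) : (∑ y : X, f y) ≤ (∑ y : X, g y) + 1 := by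
  classical
  have e1 : ∑ y ∈ (Finset.univ : Finset X).erase x₀, f y + f x₀ = ∑ y : X, f y :=
    Finset.sum_erase_add _ _ (Finset.mem_univ _)
  have e2 : ∑ y ∈ (Finset.univ : Finset X).erase x₀, g y + g x₀ = ∑ y : X, g y :=
    Finset.sum_erase_add _ _ (Finset.mem_univ _)
  have heq : ∑ y ∈ (Finset.univ : Finset X).erase x₀, f y =
      ∑ y ∈ (Finset.univ : Finset X).erase x₀, g y :=
    Finset.sum_congr rfl (fun y hy => h y (Finset.mem_erase.mp hy).1)
  omega

lemma sum_le_one {f : X → ℕ} (x₀ : X) (h : ∀ y, y ≠ x₀ → f y = 0) (hx : f x₀ ≤ 1) :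
    (∑ y : X, f y) ≤ 1 := by
  classical
  have e1 : ∑ y ∈ (Finset.univ : Finset X).erase x₀, f y + f x₀ = ∑ y : X, f y :=
    Finset.sum_erase_add _ _ (Finset.mem_univ _)
  have heq : ∑ y ∈ (Finset.univ : Finset X).erase x₀, f y = 0 :=
    Finset.sum_eq_zero (fun y hy => h y (Finset.mem_erase.mp hy).1)
  omega

/-- Cross-copy invariance of the lower potential. -/
lemma cross_inv (hk : 2 ≤ k) {S : Finset (X × Fin (2*k+1))} (hInv : InvS k F S)
    {v : X × Fin (2*k+1)} {y : X} (hne : y ≠ v.1) :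
    indF (S ∪ closedNbhd (FHk2 k X F) v) y = indF S y ∧
    (D2 (S ∪ closedNbhd (FHk2 k X F) v) y ↔ D2 S y) := by
  obtain ⟨x₀, j₀⟩ := v
  set S' := S ∪ closedNbhd (FHk2 k X F) (x₀, j₀) with hS'
  have hsub : S ⊆ S' := Finset.subset_union_left
  have hkeep : ∀ i : Fin (2*k+1), i ≠ 1 → ((y,i) ∈ S' ↔ (y,i) ∈ S) := by
    intro i hi
    refine keep_of_notMem (fun hmem => ?_)
    exact hi (cross_copy hk hmem hne).1
  have h0k := hkeep 0 (fz_ne_o hk)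
  have h2k := hkeep 2 (fun h => (fo_ne_t hk) h.symm)
  have hUk : ∀ j ∈ Ur k, ((y,j) ∈ S' ↔ (y,j) ∈ S) :=
    fun j hj => hkeep j (fun h => one_notMem_Ur hk (h ▸ hj))
  have hWk : ∀ j ∈ Wr k, ((y,j) ∈ S' ↔ (y,j) ∈ S) :=
    fun j hj => hkeep j (fun h => one_notMem_Wr hk (h ▸ hj))
  have hLocIff : (¬((y,(0 : Fin (2*k+1))) ∈ S ∧ (y,(2 : Fin (2*k+1))) ∈ S)) →
      (LocT S' y ↔ LocT S y) := by
    intro hfac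
    constructor
    · rintro (hb | ⟨j, hj, hnot⟩ | ⟨j, hj, hnot⟩)
      · exact Or.inl (fun hin => hb (hsub hin))
      · exact Or.inr (Or.inl ⟨j, hj, fun hin => hnot (hsub hin)⟩)
      · exact Or.inr (Or.inr ⟨j, hj, fun hin => hnot (hsub hin)⟩)
    · intro hl
      rcases Classical.em ((y,(0 : Fin (2*k+1))) ∈ S) with ha | ha
      · have hc : (y,(2 : Fin (2*k+1))) ∉ S := fun hc => hfac ⟨ha, hc⟩
        obtain ⟨j, hj, hnot⟩ := loc_w hk hInv hc hl
        exact Or.inr (Or.inr ⟨j, hj, fun hin => hnot ((hWk j hj).mp hin)⟩)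
      · obtain ⟨j, hj, hnot⟩ := loc_u hk hInv ha hl
        exact Or.inr (Or.inl ⟨j, hj, fun hin => hnot ((hUk j hj).mp hin)⟩)
  have hAeq : indA S' y = indA S y := by
    unfold indA
    by_cases h : (y,(0 : Fin (2*k+1))) ∈ S
    · rw [if_pos h, if_pos (h0k.mpr h)]
    · rw [if_neg h, if_neg (fun hh => h (h0k.mp hh))]
  have hCeq : indC S' y = indC S y := by
    unfold indC
    by_cases h : (y,(2 : Fin (2*k+1))) ∈ S
    · rw [if_pos h, if_pos (h2k.mpr h)]
    · rw [if_neg h, if_neg (fun hh => h (h2k.mp hh))]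
  have hFacIff : (¬((y,(0 : Fin (2*k+1))) ∈ S' ∧ (y,(2 : Fin (2*k+1))) ∈ S')) ↔
      (¬((y,(0 : Fin (2*k+1))) ∈ S ∧ (y,(2 : Fin (2*k+1))) ∈ S)) := by
    rw [h0k, h2k]
  constructor
  · have hTeq : thr S' y = thr S y := by
      unfold thr
      by_cases hfac : (¬((y,(0 : Fin (2*k+1))) ∈ S ∧ (y,(2 : Fin (2*k+1))) ∈ S))
      · by_cases hl : LocT S y
        · rw [if_pos ⟨hFacIff.mpr hfac, (hLocIff hfac).mpr hl⟩, if_pos ⟨hfac, hl⟩]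
        · rw [if_neg (fun hh => hl ((hLocIff hfac).mp hh.2)), if_neg (fun hh => hl hh.2)]
      · rw [if_neg (fun hh => hfac (hFacIff.mp hh.1)), if_neg (fun hh => hfac hh.1)]
    unfold indF
    omega
  · constructor
    · rintro ⟨hside, hl⟩
      rw [h0k, h2k] at hside
      have hfac : (¬((y,(0 : Fin (2*k+1))) ∈ S ∧ (y,(2 : Fin (2*k+1))) ∈ S)) := by
        rcases hside with ⟨h1, h2⟩ | ⟨h1, h2⟩
        · exact fun hh => h2 hh.2
        · exact fun hh => h1 hh.1
      exact ⟨hside, (hLocIff hfac).mp hl⟩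
    · rintro ⟨hside, hl⟩
      have hfac : (¬((y,(0 : Fin (2*k+1))) ∈ S ∧ (y,(2 : Fin (2*k+1))) ∈ S)) := by
        rcases hside with ⟨h1, h2⟩ | ⟨h1, h2⟩
        · exact fun hh => h2 hh.2
        · exact fun hh => h1 hh.1
      refine ⟨?_, (hLocIff hfac).mpr hl⟩
      rw [h0k, h2k]
      exact hside

/-- Own-copy drop bound when the `a`-side gets completed. -/
lemma own_drop_A (hk : 2 ≤ k) {S S' : Finset (X × Fin (2*k+1))} (hInv : InvS k F S)
    (hzero : ∀ y, ¬ D2 S y) {x : X}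
    (ha : (x,(0 : Fin (2*k+1))) ∉ S)
    (h2k : ((x,(2 : Fin (2*k+1))) ∈ S' ↔ (x,(2 : Fin (2*k+1))) ∈ S))
    (hWk : ∀ j ∈ Wr k, ((x,j) ∈ S' ↔ (x,j) ∈ S)) :
    indF S x ≤ indF S' x + 1 := by
  have hA1 : indA S x = 1 := if_neg ha
  by_cases hc2 : (x,(2 : Fin (2*k+1))) ∈ S
  · have hLoc : ¬ LocT S x := fun hl => hzero x ⟨Or.inr ⟨ha, hc2⟩, hl⟩
    have ht0 : thr S x = 0 := if_neg (fun hcond => hLoc hcond.2)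
    have hC0 : indC S x = 0 := if_pos hc2
    unfold indF
    omega
  · have hC1 : indC S x = 1 := if_neg hc2
    have hC1' : indC S' x = 1 := if_neg (fun hh => hc2 (h2k.mp hh))
    by_cases hth : thr S x = 1
    · have hl : LocT S x := by
        by_contra hl
        have : thr S x = 0 := if_neg (fun hcond => hl hcond.2)
        omega
      obtain ⟨j, hj, hnot⟩ := loc_w hk hInv hc2 hl
      have hl' : LocT S' x := Or.inr (Or.inr ⟨j, hj, fun hin => hnot ((hWk j hj).mp hin)⟩)
      have hfac' : ¬((x,(0 : Fin (2*k+1))) ∈ S' ∧ (x,(2 : Fin (2*k+1))) ∈ S') :=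
        fun hh => hc2 (h2k.mp hh.2)
      have ht1' : thr S' x = 1 := if_pos ⟨hfac', hl'⟩
      unfold indF
      omega
    · have hbnd : thr S x ≤ 1 := by unfold thr; split <;> omega
      have ht0 : thr S x = 0 := by omega
      unfold indF
      omega

/-- Own-copy drop bound when the `c`-side gets completed. -/
lemma own_drop_C (hk : 2 ≤ k) {S S' : Finset (X × Fin (2*k+1))} (hInv : InvS k F S)
    (hzero : ∀ y, ¬ D2 S y) {x : X}
    (hc : (x,(2 : Fin (2*k+1))) ∉ S)
    (h0k : ((x,(0 : Fin (2*k+1))) ∈ S' ↔ (x,(0 : Fin (2*k+1))) ∈ S))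
    (hUk : ∀ j ∈ Ur k, ((x,j) ∈ S' ↔ (x,j) ∈ S)) :
    indF S x ≤ indF S' x + 1 := by
  have hC1 : indC S x = 1 := if_neg hc
  by_cases ha0 : (x,(0 : Fin (2*k+1))) ∈ S
  · have hLoc : ¬ LocT S x := fun hl => hzero x ⟨Or.inl ⟨ha0, hc⟩, hl⟩
    have ht0 : thr S x = 0 := if_neg (fun hcond => hLoc hcond.2)
    have hA0 : indA S x = 0 := if_pos ha0
    unfold indF
    omega
  · have hA1 : indA S x = 1 := if_neg ha0
    have hA1' : indA S' x = 1 := if_neg (fun hh => ha0 (h0k.mp hh))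
    by_cases hth : thr S x = 1
    · have hl : LocT S x := by
        by_contra hl
        have : thr S x = 0 := if_neg (fun hcond => hl hcond.2)
        omega
      obtain ⟨j, hj, hnot⟩ := loc_u hk hInv ha0 hl
      have hl' : LocT S' x := Or.inr (Or.inl ⟨j, hj, fun hin => hnot ((hUk j hj).mp hin)⟩)
      have hfac' : ¬((x,(0 : Fin (2*k+1))) ∈ S' ∧ (x,(2 : Fin (2*k+1))) ∈ S') :=
        fun hh => ha0 (h0k.mp hh.1)
      have ht1' : thr S' x = 1 := if_pos ⟨hfac', hl'⟩
      unfold indF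
      omega
    · have hbnd : thr S x ≤ 1 := by unfold thr; split <;> omega
      have ht0 : thr S x = 0 := by omega
      unfold indF
      omega

/-- Own-copy drop bound when only `b`-type vertices get added in the copy. -/
lemma own_drop_B {S S' : Finset (X × Fin (2*k+1))} {x : X}
    (h0k : ((x,(0 : Fin (2*k+1))) ∈ S' ↔ (x,(0 : Fin (2*k+1))) ∈ S))
    (h2k : ((x,(2 : Fin (2*k+1))) ∈ S' ↔ (x,(2 : Fin (2*k+1))) ∈ S)) :
    indF S x ≤ indF S' x + 1 := by
  have hAeq : indA S' x = indA S x := by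
    unfold indA
    by_cases h : (x,(0 : Fin (2*k+1))) ∈ S
    · rw [if_pos h, if_pos (h0k.mpr h)]
    · rw [if_neg h, if_neg (fun hh => h (h0k.mp hh))]
  have hCeq : indC S' x = indC S x := by
    unfold indC
    by_cases h : (x,(2 : Fin (2*k+1))) ∈ S
    · rw [if_pos h, if_pos (h2k.mpr h)]
    · rw [if_neg h, if_neg (fun hh => h (h2k.mp hh))]
  have h1 : thr S x ≤ 1 := by unfold thr; split <;> omega
  unfold indF
  omega

/-- Dominator-to-move condition for the lower bound. -/
lemma LA_master (hk : 2 ≤ k) {S : Finset (X × Fin (2*k+1))} (hInv : InvS k F S)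
    (hD2 : sD2 S = 0) {v : X × Fin (2*k+1)} (hv : ¬ closedNbhd (FHk2 k X F) v ⊆ S) :
    sD2 (S ∪ closedNbhd (FHk2 k X F) v) ≤ 1 ∧
      psi S ≤ psi (S ∪ closedNbhd (FHk2 k X F) v) + 1 := by
  have hzero : ∀ y, ¬ D2 S y := by
    intro y hy
    have h1 : indD2 S y = 1 := if_pos hy
    have h2 : indD2 S y ≤ sD2 S := Finset.single_le_sum (f := fun y => indD2 S y)
      (fun _ _ => Nat.zero_le _) (Finset.mem_univ y)
    omega
  obtain ⟨x, j⟩ := v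
  set S' := S ∪ closedNbhd (FHk2 k X F) (x, j) with hS'
  have hsub : S ⊆ S' := Finset.subset_union_left
  have hcross := fun y (hy : y ≠ x) => cross_inv hk hInv (v := (x,j)) (y := y) hy
  constructor
  · refine sum_le_one x (fun y hy => ?_) (by unfold indD2; split <;> omega)
    have h2 := (hcross y hy).2
    have h3 := hzero y
    exact if_neg (fun hd => h3 (h2.mp hd))
  · refine sum_drop_one x (fun y hy => (hcross y hy).1.symm ▸ rfl) ?_
    -- own-copy bound
    rcases jcases hk j with rfl | rfl | rfl | hj | hj
    · -- a-move
      have ha := legal_a_iff hk hInv hv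
      refine own_drop_A hk hInv hzero ha ?_ ?_
      · exact keep_of_notMem (fun hmem => by
          rcases ((nbhd_a hk).mp hmem).2 with h | h
          · exact fz_ne_t hk h.symm
          · exact two_notMem_Ur hk h)
      · intro j' hj'
        exact keep_of_notMem (fun hmem => by
          rcases ((nbhd_a hk).mp hmem).2 with h | h
          · exact zero_notMem_Wr hk (h ▸ hj')
          · exact Ur_disj_Wr h hj')
    · -- b-move
      refine own_drop_B ?_ ?_
      · exact keep_of_notMem (fun hmem => by
          rcases (nbhd_b hk).mp hmem with ⟨_, h | h | h⟩ | ⟨h, _⟩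
          · exact fz_ne_o hk h
          · exact zero_notMem_Ur h
          · exact zero_notMem_Wr hk h
          · exact fz_ne_o hk h)
      · exact keep_of_notMem (fun hmem => by
          rcases (nbhd_b hk).mp hmem with ⟨_, h | h | h⟩ | ⟨h, _⟩
          · exact fo_ne_t hk h.symm
          · exact two_notMem_Ur hk h
          · exact two_notMem_Wr hk h
          · exact fo_ne_t hk h.symm)
    · -- c-move
      have hc := legal_c_iff hk hInv hv
      refine own_drop_C hk hInv hzero hc ?_ ?_
      · exact keep_of_notMem (fun hmem => by
          rcases ((nbhd_c hk).mp hmem).2 with h | h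
          · exact fz_ne_t hk h
          · exact zero_notMem_Wr hk h)
      · intro j' hj'
        exact keep_of_notMem (fun hmem => by
          rcases ((nbhd_c hk).mp hmem).2 with h | h
          · exact two_notMem_Ur hk (h ▸ hj')
          · exact Ur_disj_Wr hj' h)
    · -- u-move
      have h2keep : ((x,(2 : Fin (2*k+1))) ∈ S' ↔ (x,(2 : Fin (2*k+1))) ∈ S) :=
        keep_of_notMem (fun hmem => by
          rcases ((nbhd_u hk hj).mp hmem).2 with h | h | h
          · exact fz_ne_t hk h.symm
          · exact fo_ne_t hk h.symm
          · exact two_notMem_Ur hk h)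
      have hWkeep : ∀ j' ∈ Wr k, ((x,j') ∈ S' ↔ (x,j') ∈ S) := by
        intro j' hj'
        exact keep_of_notMem (fun hmem => by
          rcases ((nbhd_u hk hj).mp hmem).2 with h | h | h
          · exact zero_notMem_Wr hk (h ▸ hj')
          · exact one_notMem_Wr hk (h ▸ hj')
          · exact Ur_disj_Wr h hj')
      by_cases ha : (x,(0 : Fin (2*k+1))) ∈ S
      · refine own_drop_B ?_ h2keep
        exact Iff.intro (fun _ => ha) (fun h => hsub h)
      · exact own_drop_A hk hInv hzero ha h2keep hWkeep
    · -- w-move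
      have h0keep : ((x,(0 : Fin (2*k+1))) ∈ S' ↔ (x,(0 : Fin (2*k+1))) ∈ S) :=
        keep_of_notMem (fun hmem => by
          rcases ((nbhd_w hk hj).mp hmem).2 with h | h | h
          · exact fz_ne_o hk h
          · exact fz_ne_t hk h
          · exact zero_notMem_Wr hk h)
      have hUkeep : ∀ j' ∈ Ur k, ((x,j') ∈ S' ↔ (x,j') ∈ S) := by
        intro j' hj'
        exact keep_of_notMem (fun hmem => by
          rcases ((nbhd_w hk hj).mp hmem).2 with h | h | h
          · exact one_notMem_Ur hk (h ▸ hj')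
          · exact two_notMem_Ur hk (h ▸ hj')
          · exact Ur_disj_Wr hj' h)
      by_cases hc : (x,(2 : Fin (2*k+1))) ∈ S
      · refine own_drop_B h0keep ?_
        exact Iff.intro (fun _ => hc) (fun h => hsub h)
      · exact own_drop_C hk hInv hzero hc h0keep hUkeep

lemma exists_indF {S : Finset (X × Fin (2*k+1))} (h : 1 ≤ psi S) :
    ∃ x, 1 ≤ indF S x := by
  by_contra hc
  push_neg at hc
  have : psi S = 0 := Finset.sum_eq_zero (fun x _ => by have := hc x; omega)
  omega

/-- Staller-to-move condition for the lower bound. -/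
lemma LB_master (hk : 2 ≤ k) {S : Finset (X × Fin (2*k+1))} (hInv : InvS k F S)
    (hD2 : sD2 S ≤ 1) (hpsi : 1 ≤ psi S) :
    ∃ v, ¬ closedNbhd (FHk2 k X F) v ⊆ S ∧
      sD2 (S ∪ closedNbhd (FHk2 k X F) v) = 0 ∧
      psi S ≤ psi (S ∪ closedNbhd (FHk2 k X F) v) + 1 := by
  by_cases hex : ∃ x, D2 S x
  · -- play b on the D2 copy
    obtain ⟨x, hD2x⟩ := hex
    have hothers : ∀ y, y ≠ x → ¬ D2 S y := by
      intro y hy hDy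
      have h1 : indD2 S y = 1 := if_pos hDy
      have h2 : indD2 S x = 1 := if_pos hD2x
      have hle : indD2 S y + indD2 S x ≤ sD2 S := by
        classical
        have e1 : ∑ z ∈ (Finset.univ : Finset X).erase y, indD2 S z + indD2 S y = sD2 S :=
          Finset.sum_erase_add _ _ (Finset.mem_univ _)
        have e2 : indD2 S x ≤ ∑ z ∈ (Finset.univ : Finset X).erase y, indD2 S z :=
          Finset.single_le_sum (f := fun z => indD2 S z) (fun _ _ => Nat.zero_le _)
            (Finset.mem_erase.mpr ⟨fun hxy => hy hxy.symm, Finset.mem_univ _⟩)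
        omega
      omega
    refine ⟨(x, 1), LocT_legal hk hD2x.2, ?_, ?_⟩
    · set S' := S ∪ closedNbhd (FHk2 k X F) (x, (1 : Fin (2*k+1))) with hS'
      refine Finset.sum_eq_zero (fun y _ => ?_)
      by_cases hy : y = x
      · subst hy
        exact if_neg (fun hd => notLocT_after_b hk hd.2)
      · exact if_neg (fun hd => hothers y hy ((cross_inv hk hInv (v := (x,1)) hy).2.mp hd))
    · refine sum_drop_one x
        (fun y hy => ((cross_inv hk hInv (v := (x,1)) hy).1).symm ▸ rfl) ?_
      refine own_drop_B ?_ ?_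
      · exact keep_of_notMem (fun hmem => by
          rcases (nbhd_b hk).mp hmem with ⟨_, h | h | h⟩ | ⟨h, _⟩
          · exact fz_ne_o hk h
          · exact zero_notMem_Ur h
          · exact zero_notMem_Wr hk h
          · exact fz_ne_o hk h)
      · exact keep_of_notMem (fun hmem => by
          rcases (nbhd_b hk).mp hmem with ⟨_, h | h | h⟩ | ⟨h, _⟩
          · exact fo_ne_t hk h.symm
          · exact two_notMem_Ur hk h
          · exact two_notMem_Wr hk h
          · exact fo_ne_t hk h.symm)
  · -- no D2 copy at all
    push_neg at hex
    obtain ⟨x, hx⟩ := exists_indF hpsi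
    have hb_keep0 : ∀ (v : X × Fin (2*k+1)), True := fun _ => trivial
    by_cases hth : thr S x = 1
    · -- the third term is positive: both sides missing, play b
      have hcond : (¬((x,(0 : Fin (2*k+1))) ∈ S ∧ (x,(2 : Fin (2*k+1))) ∈ S)) ∧ LocT S x := by
        by_contra hc
        have : thr S x = 0 := if_neg hc
        omega
      have hboth : (x,(0 : Fin (2*k+1))) ∉ S ∧ (x,(2 : Fin (2*k+1))) ∉ S := by
        constructor
        · intro ha
          have hc2 : (x,(2 : Fin (2*k+1))) ∉ S := fun h2 => hcond.1 ⟨ha, h2⟩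
          exact hex x ⟨Or.inl ⟨ha, hc2⟩, hcond.2⟩
        · intro hc2
          have ha : (x,(0 : Fin (2*k+1))) ∉ S := fun h0 => hcond.1 ⟨h0, hc2⟩
          exact hex x ⟨Or.inr ⟨ha, hc2⟩, hcond.2⟩
      refine ⟨(x, 1), LocT_legal hk hcond.2, ?_, ?_⟩
      · set S' := S ∪ closedNbhd (FHk2 k X F) (x, (1 : Fin (2*k+1))) with hS'
        have h0keep : ((x,(0 : Fin (2*k+1))) ∈ S' ↔ (x,(0 : Fin (2*k+1))) ∈ S) :=
          keep_of_notMem (fun hmem => by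
            rcases (nbhd_b hk).mp hmem with ⟨_, h | h | h⟩ | ⟨h, _⟩
            · exact fz_ne_o hk h
            · exact zero_notMem_Ur h
            · exact zero_notMem_Wr hk h
            · exact fz_ne_o hk h)
        have h2keep : ((x,(2 : Fin (2*k+1))) ∈ S' ↔ (x,(2 : Fin (2*k+1))) ∈ S) :=
          keep_of_notMem (fun hmem => by
            rcases (nbhd_b hk).mp hmem with ⟨_, h | h | h⟩ | ⟨h, _⟩
            · exact fo_ne_t hk h.symm
            · exact two_notMem_Ur hk h
            · exact two_notMem_Wr hk h
            · exact fo_ne_t hk h.symm)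
        refine Finset.sum_eq_zero (fun y _ => ?_)
        by_cases hy : y = x
        · subst hy
          exact if_neg (fun hd => notLocT_after_b hk hd.2)
        · exact if_neg (fun hd => hex y ((cross_inv hk hInv (v := (x,1)) hy).2.mp hd))
      · refine sum_drop_one x
          (fun y hy => ((cross_inv hk hInv (v := (x,1)) hy).1).symm ▸ rfl) ?_
        refine own_drop_B ?_ ?_
        · exact keep_of_notMem (fun hmem => by
            rcases (nbhd_b hk).mp hmem with ⟨_, h | h | h⟩ | ⟨h, _⟩
            · exact fz_ne_o hk h
            · exact zero_notMem_Ur h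
            · exact zero_notMem_Wr hk h
            · exact fz_ne_o hk h)
        · exact keep_of_notMem (fun hmem => by
            rcases (nbhd_b hk).mp hmem with ⟨_, h | h | h⟩ | ⟨h, _⟩
            · exact fo_ne_t hk h.symm
            · exact two_notMem_Ur hk h
            · exact two_notMem_Wr hk h
            · exact fo_ne_t hk h.symm)
    · -- a side is missing: complete it
      have hbnd : thr S x ≤ 1 := by unfold thr; split <;> omega
      have ht0 : thr S x = 0 := by omega
      have hAC : 1 ≤ indA S x + indC S x := by
        unfold indF at hx
        omega
      have hnl : ¬ ((¬((x,(0 : Fin (2*k+1))) ∈ S ∧ (x,(2 : Fin (2*k+1))) ∈ S)) ∧ LocT S x) :=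
        fun hc => by have : thr S x = 1 := if_pos hc; omega
      by_cases ha : (x,(0 : Fin (2*k+1))) ∈ S
      · -- then c is missing: play c
        have hc : (x,(2 : Fin (2*k+1))) ∉ S := by
          intro hc2
          have hA0 : indA S x = 0 := if_pos ha
          have hC0 : indC S x = 0 := if_pos hc2
          omega
        have hnLoc : ¬ LocT S x := fun hl => hnl ⟨fun hh => hc hh.2, hl⟩
        refine ⟨(x, 2), fun hsub => hc (hsub (mem_closedNbhd_self _ _)), ?_, ?_⟩
        · set S' := S ∪ closedNbhd (FHk2 k X F) (x, (2 : Fin (2*k+1))) with hS'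
          have hsub' : S ⊆ S' := Finset.subset_union_left
          have hnLoc' : ¬ LocT S' x := by
            intro hl
            apply hnLoc
            rcases hl with hb | ⟨j', hj', hnot⟩ | ⟨j', hj', hnot⟩
            · exact Or.inl (fun hin => hb (hsub' hin))
            · exact Or.inr (Or.inl ⟨j', hj', fun hin => hnot (hsub' hin)⟩)
            · exact Or.inr (Or.inr ⟨j', hj', fun hin => hnot (hsub' hin)⟩)
          refine Finset.sum_eq_zero (fun y _ => ?_)
          by_cases hy : y = x
          · subst hy
            exact if_neg (fun hd => hnLoc' hd.2)
          · exact if_neg (fun hd => hex y ((cross_inv hk hInv (v := (x,2)) hy).2.mp hd))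
        · set S' := S ∪ closedNbhd (FHk2 k X F) (x, (2 : Fin (2*k+1))) with hS'
          refine sum_drop_one x
            (fun y hy => ((cross_inv hk hInv (v := (x,2)) hy).1).symm ▸ rfl) ?_
          have hA0 : indA S x = 0 := if_pos ha
          have hC1 : indC S x = 1 := if_neg hc
          have hT0' : thr S' x ≤ 1 := by unfold thr; split <;> omega
          unfold indF
          omega
      · -- a missing: play a
        refine ⟨(x, 0), fun hsub => ha (hsub (mem_closedNbhd_self _ _)), ?_, ?_⟩
        · set S' := S ∪ closedNbhd (FHk2 k X F) (x, (0 : Fin (2*k+1))) with hS'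
          have hsub' : S ⊆ S' := Finset.subset_union_left
          have hnLoc : ¬ LocT S x := fun hl => hnl ⟨fun hh => ha hh.1, hl⟩
          have hnLoc' : ¬ LocT S' x := by
            intro hl
            apply hnLoc
            rcases hl with hb | ⟨j', hj', hnot⟩ | ⟨j', hj', hnot⟩
            · exact Or.inl (fun hin => hb (hsub' hin))
            · exact Or.inr (Or.inl ⟨j', hj', fun hin => hnot (hsub' hin)⟩)
            · exact Or.inr (Or.inr ⟨j', hj', fun hin => hnot (hsub' hin)⟩)
          refine Finset.sum_eq_zero (fun y _ => ?_)
          by_cases hy : y = x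
          · subst hy
            exact if_neg (fun hd => hnLoc' hd.2)
          · exact if_neg (fun hd => hex y ((cross_inv hk hInv (v := (x,0)) hy).2.mp hd))
        · set S' := S ∪ closedNbhd (FHk2 k X F) (x, (0 : Fin (2*k+1))) with hS'
          refine sum_drop_one x
            (fun y hy => ((cross_inv hk hInv (v := (x,0)) hy).1).symm ▸ rfl) ?_
          have hA1 : indA S x = 1 := if_neg ha
          have hC : indC S' x = indC S x := by
            have h2keep : ((x,(2 : Fin (2*k+1))) ∈ S' ↔ (x,(2 : Fin (2*k+1))) ∈ S) :=
              keep_of_notMem (fun hmem => by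
                rcases ((nbhd_a hk).mp hmem).2 with h | h
                · exact fz_ne_t hk h.symm
                · exact two_notMem_Ur hk h)
            unfold indC
            by_cases h : (x,(2 : Fin (2*k+1))) ∈ S
            · rw [if_pos h, if_pos (h2keep.mpr h)]
            · rw [if_neg h, if_neg (fun hh => h (h2keep.mp hh))]
          unfold indF
          omega

lemma union_insts (S T : Finset (X × Fin (2*k+1))) :
    @Union.union _ (@Finset.instUnion _ (fun a b => Classical.propDecidable (a = b))) S T =
      S ∪ T := by
  ext q
  rw [@Finset.mem_union _ (fun a b => Classical.propDecidable (a = b)), Finset.mem_union]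

/-! ### Boundary values -/

lemma sA_empty : sA (∅ : Finset (X × Fin (2*k+1))) = Fintype.card X := by
  unfold sA indA
  simp [Finset.card_univ]

lemma sC_empty : sC (∅ : Finset (X × Fin (2*k+1))) = Fintype.card X := by
  unfold sC indC
  simp [Finset.card_univ]

lemma sT_empty : sT F (∅ : Finset (X × Fin (2*k+1))) = Fintype.card X := by
  unfold sT indT3
  have h : ∀ x : X, T3 F (∅ : Finset (X × Fin (2*k+1))) x := by
    intro x hsub
    exact Finset.notMem_empty _ (hsub (mem_closedNbhd_self _ _))
  rw [Finset.sum_congr rfl (fun x _ => if_pos (h x))]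
  simp [Finset.card_univ]

lemma Phi_empty : Phi F (∅ : Finset (X × Fin (2*k+1))) = 3 * Fintype.card X := by
  unfold Phi
  rw [sA_empty, sC_empty, sT_empty]
  ring

lemma nP_empty : nP F (∅ : Finset (X × Fin (2*k+1))) = 0 := by
  unfold nP
  refine Finset.sum_eq_zero (fun x _ => ?_)
  unfold indP1
  exact if_neg (fun hp => Finset.notMem_empty _ hp.2.1)

lemma psi_empty : psi (∅ : Finset (X × Fin (2*k+1))) = 3 * Fintype.card X := by
  unfold psi indF
  have h : ∀ x : X, indA (∅ : Finset (X × Fin (2*k+1))) x +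
      indC (∅ : Finset (X × Fin (2*k+1))) x + thr (∅ : Finset (X × Fin (2*k+1))) x = 3 := by
    intro x
    have h1 : indA (∅ : Finset (X × Fin (2*k+1))) x = 1 := if_neg (Finset.notMem_empty _)
    have h2 : indC (∅ : Finset (X × Fin (2*k+1))) x = 1 := if_neg (Finset.notMem_empty _)
    have h3 : thr (∅ : Finset (X × Fin (2*k+1))) x = 1 :=
      if_pos ⟨fun hh => Finset.notMem_empty _ hh.1, Or.inl (Finset.notMem_empty _)⟩
    omega
  rw [Finset.sum_congr rfl (fun x _ => h x), Finset.sum_const, Finset.card_univ,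
    smul_eq_mul]
  ring

lemma sD2_empty : sD2 (∅ : Finset (X × Fin (2*k+1))) = 0 := by
  unfold sD2
  refine Finset.sum_eq_zero (fun x _ => ?_)
  unfold indD2
  refine if_neg (fun hd => ?_)
  rcases hd.1 with ⟨h1, _⟩ | ⟨_, h2⟩
  · exact Finset.notMem_empty _ h1
  · exact Finset.notMem_empty _ h2

lemma psi_univ : psi (Finset.univ : Finset (X × Fin (2*k+1))) = 0 := by
  unfold psi indF
  refine Finset.sum_eq_zero (fun x _ => ?_)
  have h1 : indA (Finset.univ : Finset (X × Fin (2*k+1))) x = 0 := if_pos (Finset.mem_univ _)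
  have h2 : indC (Finset.univ : Finset (X × Fin (2*k+1))) x = 0 := if_pos (Finset.mem_univ _)
  have h3 : thr (Finset.univ : Finset (X × Fin (2*k+1))) x = 0 :=
    if_neg (fun hh => hh.1 ⟨Finset.mem_univ _, Finset.mem_univ _⟩)
  omega

lemma nP_le_Phi {S : Finset (X × Fin (2*k+1))} : nP F S ≤ Phi F S := by
  have h1 : nP F S ≤ sT F S := by
    refine Finset.sum_le_sum (fun x _ => ?_)
    unfold indP1 indT3
    by_cases hp : P1 F S x
    · simp [hp, hp.1]
    · simp [hp]
  unfold Phi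
  omega

end Concrete

/-- for every `k ≥ 2` and every `k`-uniform hypergraph `F` on a vertex set
of size `t`, `γ_g(F(H_{k,2})) = γ_g'(F(H_{k,2})) = 3t`. -/
theorem stmt_19 (k : ℕ) (hk : 2 ≤ k) (X : Type) [Fintype X]
    (F : Finset (Finset X)) (hF : ∀ e ∈ F, e.card = k) :
    gammaGame (FHk2 k X F) = 3 * Fintype.card X ∧
    gammaGame' (FHk2 k X F) = 3 * Fintype.card X := by
  have hA : ∀ S, InvS k F S → ∀ v₀, ¬ closedNbhd (FHk2 k X F) v₀ ⊆ S →
      ∃ v, ¬ closedNbhd (FHk2 k X F) v ⊆ S ∧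
        (Phi F (S ∪ closedNbhd (FHk2 k X F) v) -
          nP F (S ∪ closedNbhd (FHk2 k X F) v) / 2) + 1 ≤
          (Phi F S - (nP F S + 1) / 2) ∧ InvS k F (S ∪ closedNbhd (FHk2 k X F) v) := by
    intro S hInv v₀ hv₀
    obtain ⟨v, hv, hineq⟩ := UA_master hk hInv hv₀
    refine ⟨v, hv, ?_, InvS_union hInv v⟩
    have h1 : nP F S ≤ Phi F S := nP_le_Phi
    have h2 : nP F (S ∪ closedNbhd (FHk2 k X F) v) ≤
        Phi F (S ∪ closedNbhd (FHk2 k X F) v) := nP_le_Phi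
    omega
  have hB : ∀ S, InvS k F S → ∀ v, ¬ closedNbhd (FHk2 k X F) v ⊆ S →
      (Phi F (S ∪ closedNbhd (FHk2 k X F) v) -
        (nP F (S ∪ closedNbhd (FHk2 k X F) v) + 1) / 2) + 1 ≤
        (Phi F S - nP F S / 2) ∧ InvS k F (S ∪ closedNbhd (FHk2 k X F) v) := by
    intro S hInv v hv
    refine ⟨?_, InvS_union hInv v⟩
    have hineq := UB_master hk hInv hv
    have h1 : nP F S ≤ Phi F S := nP_le_Phi
    have h2 : nP F (S ∪ closedNbhd (FHk2 k X F) v) ≤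
        Phi F (S ∪ closedNbhd (FHk2 k X F) v) := nP_le_Phi
    omega
  have hup := game_upper (FHk2 k X F) (InvS k F)
    (fun S => Phi F S - (nP F S + 1) / 2) (fun S => Phi F S - nP F S / 2)
    (by simp only [union_insts]; exact hA) (by simp only [union_insts]; exact hB) ∅ InvS_empty
  have hD : ∀ S, (InvS k F S ∧ sD2 S = 0) → ∀ v, ¬ closedNbhd (FHk2 k X F) v ⊆ S →
      (InvS k F (S ∪ closedNbhd (FHk2 k X F) v) ∧
        sD2 (S ∪ closedNbhd (FHk2 k X F) v) ≤ 1) ∧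
      psi S ≤ psi (S ∪ closedNbhd (FHk2 k X F) v) + 1 := by
    rintro S ⟨hInv, hD2⟩ v hv
    obtain ⟨h1, h2⟩ := LA_master hk hInv hD2 hv
    exact ⟨⟨InvS_union hInv v, h1⟩, h2⟩
  have hSm : ∀ S, (InvS k F S ∧ sD2 S ≤ 1) → 1 ≤ psi S →
      ∃ v, ¬ closedNbhd (FHk2 k X F) v ⊆ S ∧
        (InvS k F (S ∪ closedNbhd (FHk2 k X F) v) ∧
          sD2 (S ∪ closedNbhd (FHk2 k X F) v) = 0) ∧
        psi S ≤ psi (S ∪ closedNbhd (FHk2 k X F) v) + 1 := by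
    rintro S ⟨hInv, hD2⟩ hps
    obtain ⟨v, h1, h2, h3⟩ := LB_master hk hInv hD2 hps
    exact ⟨v, h1, ⟨InvS_union hInv v, h2⟩, h3⟩
  have hlow := game_lower (FHk2 k X F)
    (fun S => InvS k F S ∧ sD2 S = 0) (fun S => InvS k F S ∧ sD2 S ≤ 1)
    psi psi psi_univ (by simp only [union_insts]; exact hD)
    (by simp only [union_insts]; exact hSm) ∅
  have hPhiE := Phi_empty (k := k) (X := X) (F := F)
  have hnPE := nP_empty (k := k) (X := X) (F := F)
  have hpsiE := psi_empty (k := k) (X := X)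
  constructor
  · have h1 := hup.1
    have h2 := hlow.1 ⟨InvS_empty, sD2_empty⟩
    unfold gammaGame
    simp only [hPhiE, hnPE] at h1
    rw [hpsiE] at h2
    omega
  · have h1 := hup.2
    have h2 := hlow.2 ⟨InvS_empty, by rw [sD2_empty]; exact Nat.zero_le _⟩
    unfold gammaGame'
    simp only [hPhiE, hnPE] at h1
    rw [hpsiE] at h2
    omega
end
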